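/- arXiv:math/0505291 — 6 statements merged into one kernel-verified Lean document; each statement's English description precedes it below -/
import Mathlib

section
/- Let D be a thick convex subset of a real vector space. Then there exists a function η : D → ℝ, depending only on D, such that for every ε ≥ 0 and every ε-Jensen function f : D → ℝ there is a Jensen function a : D → ℝ satisfying |f(x) − a(x)| ≤ ε·η(x) for all x ∈ D. -/
/-- On a thick convex subset `D` of a real vector space there is a function `η : D → ℝ`
(depending only on `D`) such that for every `ε`-Jensen `f : D → ℝ` there is a Jensen
function `a : D → ℝ` with `|f x - a x| ≤ ε · η x` for all `x ∈ D`. -/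
theorem stmt_13 {X : Type*} [AddCommGroup X] [Module ℝ X] (D : Set X) (hD : Convex ℝ D)
    (hthick : ∃ d ∈ D, ∀ v ∈ Submodule.span ℝ D, ∃ δ : ℝ, 0 < δ ∧
      ∀ t : ℝ, 0 < t → t ≤ δ → d + t • v ∈ D ∧ d - t • v ∈ D) :
    ∃ η : X → ℝ, ∀ ε : ℝ, 0 ≤ ε → ∀ f : X → ℝ,
      (∀ x ∈ D, ∀ y ∈ D, |f ((2 : ℝ)⁻¹ • (x + y)) - (f x + f y) / 2| ≤ ε) →
      ∃ a : X → ℝ,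
        (∀ x ∈ D, ∀ y ∈ D, a ((2 : ℝ)⁻¹ • (x + y)) = (a x + a y) / 2) ∧
        ∀ x ∈ D, |f x - a x| ≤ ε * η x := by
  classical
  obtain ⟨d, hd, hth⟩ := hthick
  letI : Module ℚ X := Module.compHom X (algebraMap ℚ ℝ)
  haveI : IsScalarTower ℚ ℝ X := by
    constructor
    intro q r x
    show ((q:ℝ) * r) • x = (algebraMap ℚ ℝ q) • (r • x)
    rw [mul_smul]; rfl
  have hqr : ∀ (q : ℚ) (x : X), (q:ℝ) • x = q • x := by
    intro q x
    rw [← algebraMap_smul (R := ℚ) ℝ q x]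
    norm_num
  -- the Jensen predicate
  set Jen : (X → ℝ) → ℝ → Prop :=
    fun f ε => ∀ x ∈ D, ∀ y ∈ D, |f ((2 : ℝ)⁻¹ • (x + y)) - (f x + f y) / 2| ≤ ε with hJen
  -- basic facts about E = {u | d + u ∈ D}
  have hE0 : d + (0:X) ∈ D := by simpa using hd
  have hEmid : ∀ {u v : X}, d + u ∈ D → d + v ∈ D → d + (2:ℝ)⁻¹ • (u + v) ∈ D := by
    intro u v hu hv
    have h := hD hu hv (by norm_num : (0:ℝ) ≤ 2⁻¹) (by norm_num : (0:ℝ) ≤ 2⁻¹)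
      (by norm_num : (2:ℝ)⁻¹ + 2⁻¹ = 1)
    have : (2:ℝ)⁻¹ • (d + u) + (2:ℝ)⁻¹ • (d + v) = d + (2:ℝ)⁻¹ • (u + v) := by module
    rwa [this] at h
  have hEpow : ∀ (u : X), d + u ∈ D → ∀ k : ℕ, d + ((2:ℝ)^k)⁻¹ • u ∈ D := by
    intro u hu k
    induction k with
    | zero => simpa using hu
    | succ k ih =>
      have h := hEmid ih hE0
      have : d + (2:ℝ)⁻¹ • (((2:ℝ)^k)⁻¹ • u + 0) = d + ((2:ℝ)^(k+1))⁻¹ • u := by module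
      rwa [this] at h
  -- the scale function
  have hnex : ∀ v : X, ∃ n₀ : ℕ, v ∈ Submodule.span ℝ D →
      ∀ m : ℕ, n₀ ≤ m → d + ((2:ℝ)^m)⁻¹ • v ∈ D := by
    intro v
    by_cases hv : v ∈ Submodule.span ℝ D
    · obtain ⟨δ, hδ, hδ2⟩ := hth v hv
      obtain ⟨n₀, hn₀⟩ : ∃ n₀ : ℕ, δ⁻¹ < (2:ℝ)^n₀ := pow_unbounded_of_one_lt δ⁻¹ one_lt_two
      refine ⟨n₀, fun _ m hm => ?_⟩
      have h2m : (0:ℝ) < (2:ℝ)^m := by positivity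
      have hle : ((2:ℝ)^m)⁻¹ ≤ δ := by
        have h1 : δ⁻¹ < (2:ℝ)^m := lt_of_lt_of_le hn₀ (pow_le_pow_right₀ one_le_two hm)
        have := inv_anti₀ (by positivity) h1.le
        simpa using this
      exact (hδ2 _ (by positivity) hle).1
    · exact ⟨0, fun h => absurd h hv⟩
  choose nfun hnfun using hnex
  -- the rescaled-value function
  set G : (X → ℝ) → X → ℝ :=
    fun f v => (2:ℝ)^(nfun v) * (f (d + ((2:ℝ)^(nfun v))⁻¹ • v) - f d) with hG
  have hG0 : ∀ f : X → ℝ, G f 0 = 0 := by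
    intro f
    simp [hG]
  -- Lemma S : halving inside D
  have lemS : ∀ (ε : ℝ), 0 ≤ ε → ∀ (f : X → ℝ), Jen f ε → ∀ (u : X), d + u ∈ D → ∀ k : ℕ,
      |(f (d + u) - f d) - (2:ℝ)^k * (f (d + ((2:ℝ)^k)⁻¹ • u) - f d)| ≤ ((2:ℝ)^(k+1) - 2) * ε := by
    intro ε hε f hf u hu k
    induction k with
    | zero => simp
    | succ k ih =>
      have hx : d + ((2:ℝ)^k)⁻¹ • u ∈ D := hEpow u hu k
      have hmid := hf _ hx _ hd
      have hid : (2:ℝ)⁻¹ • ((d + ((2:ℝ)^k)⁻¹ • u) + d) = d + ((2:ℝ)^(k+1))⁻¹ • u := by module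
      rw [hid] at hmid
      have hp1 : (0:ℝ) < (2:ℝ)^(k+1) := by positivity
      have key : (f (d + u) - f d) - (2:ℝ)^(k+1) * (f (d + ((2:ℝ)^(k+1))⁻¹ • u) - f d)
          = ((f (d + u) - f d) - (2:ℝ)^k * (f (d + ((2:ℝ)^k)⁻¹ • u) - f d))
            - (2:ℝ)^(k+1) * (f (d + ((2:ℝ)^(k+1))⁻¹ • u)
              - (f (d + ((2:ℝ)^k)⁻¹ • u) + f d) / 2) := by
        rw [pow_succ]; ring
      rw [key, sub_eq_add_neg]
      refine (abs_add_le _ _).trans ?_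
      rw [abs_neg, abs_mul, abs_of_pos hp1]
      have h2 : (2:ℝ)^(k+1) * |f (d + ((2:ℝ)^(k+1))⁻¹ • u)
          - (f (d + ((2:ℝ)^k)⁻¹ • u) + f d) / 2| ≤ (2:ℝ)^(k+1) * ε :=
        mul_le_mul_of_nonneg_left hmid hp1.le
      have hexp : (2:ℝ)^(k+1+1) = 2 * (2:ℝ)^(k+1) := by ring
      rw [hexp]
      linarith [ih, h2, hp1]
  -- scale lemma : G versus value at any finer scale
  have lemScale : ∀ (ε : ℝ), 0 ≤ ε → ∀ (f : X → ℝ), Jen f ε → ∀ (v : X),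
      v ∈ Submodule.span ℝ D → ∀ m : ℕ, nfun v ≤ m →
      |G f v - (2:ℝ)^m * (f (d + ((2:ℝ)^m)⁻¹ • v) - f d)| ≤ (2:ℝ)^(m+1) * ε := by
    intro ε hε f hf v hv m hm
    have hu : d + ((2:ℝ)^(nfun v))⁻¹ • v ∈ D := hnfun v hv (nfun v) le_rfl
    obtain ⟨k, hmk⟩ : ∃ k : ℕ, nfun v + k = m := ⟨m - nfun v, by omega⟩
    have hS := lemS ε hε f hf _ hu k
    have hid : ((2:ℝ)^k)⁻¹ • (((2:ℝ)^(nfun v))⁻¹ • v) = ((2:ℝ)^m)⁻¹ • v := by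
      rw [← hmk]; module
    rw [hid] at hS
    have hpn : (0:ℝ) < (2:ℝ)^(nfun v) := by positivity
    have hpk : (0:ℝ) < (2:ℝ)^k := by positivity
    have hrw : G f v - (2:ℝ)^m * (f (d + ((2:ℝ)^m)⁻¹ • v) - f d)
        = (2:ℝ)^(nfun v) * ((f (d + ((2:ℝ)^(nfun v))⁻¹ • v) - f d)
          - (2:ℝ)^k * (f (d + ((2:ℝ)^m)⁻¹ • v) - f d)) := by
      simp only [hG]
      rw [← hmk, pow_add]
      ring
    rw [hrw, abs_mul, abs_of_pos hpn]
    have h1 := mul_le_mul_of_nonneg_left hS hpn.le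
    refine h1.trans ?_
    have h2 : (2:ℝ)^(nfun v) * (((2:ℝ)^(k+1) - 2) * ε) ≤ (2:ℝ)^(m+1) * ε := by
      have hmm : (2:ℝ)^(m+1) = (2:ℝ)^(nfun v) * ((2:ℝ)^k * 2) := by
        rw [← hmk]; ring
      rw [hmm]
      have : (2:ℝ)^(nfun v) * ((2:ℝ)^(k+1) - 2) ≤ (2:ℝ)^(nfun v) * ((2:ℝ)^k * 2) := by
        have : (2:ℝ)^(k+1) - 2 ≤ (2:ℝ)^k * 2 := by rw [pow_succ]; linarith
        exact mul_le_mul_of_nonneg_left this hpn.le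
      nlinarith [hε]
    exact h2
  -- triangle helper
  have tri : ∀ a b c z : ℝ, |a - b - c + z| ≤ |a| + |b| + |c| + |z| := by
    intro a b c z
    calc |a - b - c + z| ≤ |a - b - c| + |z| := abs_add_le _ _
      _ ≤ (|a - b| + |c|) + |z| := by linarith [abs_sub (a-b) c]
      _ ≤ ((|a| + |b|) + |c|) + |z| := by linarith [abs_sub a b]
      _ = |a| + |b| + |c| + |z| := by ring
  -- approximate additivity of G
  have hGadd : ∀ v w : X, v ∈ Submodule.span ℝ D → w ∈ Submodule.span ℝ D →
      ∃ C : ℝ, ∀ ε : ℝ, 0 ≤ ε → ∀ f : X → ℝ, Jen f ε →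
        |G f (v + w) - G f v - G f w| ≤ ε * C := by
    intro v w hv hw
    have hvw : v + w ∈ Submodule.span ℝ D := add_mem hv hw
    set M := max (max (nfun v) (nfun w)) (nfun (v+w)) with hM
    have hMv : nfun v ≤ M := le_trans (le_max_left _ _) (le_max_left _ _)
    have hMw : nfun w ≤ M := le_trans (le_max_right _ _) (le_max_left _ _)
    have hMvw : nfun (v+w) ≤ M + 1 := le_trans (le_max_right _ _) (Nat.le_succ M)
    refine ⟨(2:ℝ)^(M+2) + (2:ℝ)^(M+1) + (2:ℝ)^(M+1) + (2:ℝ)^(M+1), ?_⟩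
    intro ε hε f hf
    have hsv := lemScale ε hε f hf v hv M hMv
    have hsw := lemScale ε hε f hf w hw M hMw
    have hsvw := lemScale ε hε f hf (v+w) hvw (M+1) hMvw
    have hxv : d + ((2:ℝ)^M)⁻¹ • v ∈ D := hnfun v hv M hMv
    have hxw : d + ((2:ℝ)^M)⁻¹ • w ∈ D := hnfun w hw M hMw
    have hmid := hf _ hxv _ hxw
    have hid : (2:ℝ)⁻¹ • ((d + ((2:ℝ)^M)⁻¹ • v) + (d + ((2:ℝ)^M)⁻¹ • w))
        = d + ((2:ℝ)^(M+1))⁻¹ • (v + w) := by module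
    rw [hid] at hmid
    have hp1 : (0:ℝ) < (2:ℝ)^(M+1) := by positivity
    have key : G f (v+w) - G f v - G f w
        = (G f (v+w) - (2:ℝ)^(M+1) * (f (d + ((2:ℝ)^(M+1))⁻¹ • (v+w)) - f d))
          - (G f v - (2:ℝ)^M * (f (d + ((2:ℝ)^M)⁻¹ • v) - f d))
          - (G f w - (2:ℝ)^M * (f (d + ((2:ℝ)^M)⁻¹ • w) - f d))
          + (2:ℝ)^(M+1) * (f (d + ((2:ℝ)^(M+1))⁻¹ • (v+w))
              - (f (d + ((2:ℝ)^M)⁻¹ • v) + f (d + ((2:ℝ)^M)⁻¹ • w)) / 2) := by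
      rw [pow_succ]; ring
    rw [key]
    refine (tri _ _ _ _).trans ?_
    rw [abs_mul, abs_of_pos hp1]
    have h4 : (2:ℝ)^(M+1) * |f (d + ((2:ℝ)^(M+1))⁻¹ • (v+w))
        - (f (d + ((2:ℝ)^M)⁻¹ • v) + f (d + ((2:ℝ)^M)⁻¹ • w)) / 2| ≤ (2:ℝ)^(M+1) * ε :=
      mul_le_mul_of_nonneg_left hmid hp1.le
    have hexp : (2:ℝ)^(M+1+1) = (2:ℝ)^(M+2) := by norm_num
    rw [hexp] at hsvw
    linarith [hsv, hsw, hsvw, h4]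
  -- G of zero and natural multiples
  have hGnat : ∀ (k : ℕ) (v : X), v ∈ Submodule.span ℝ D →
      ∃ C : ℝ, ∀ ε : ℝ, 0 ≤ ε → ∀ f : X → ℝ, Jen f ε →
        |G f ((k:ℝ) • v) - (k:ℝ) * G f v| ≤ ε * C := by
    intro k v hv
    induction k with
    | zero =>
      refine ⟨0, fun ε hε f hf => ?_⟩
      simp [hG0 f]
    | succ k ih =>
      obtain ⟨C1, hC1⟩ := ih
      have hkv : (k:ℝ) • v ∈ Submodule.span ℝ D := Submodule.smul_mem _ _ hv
      obtain ⟨C2, hC2⟩ := hGadd ((k:ℝ) • v) v hkv hv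
      refine ⟨C2 + C1, fun ε hε f hf => ?_⟩
      have h1 := hC1 ε hε f hf
      have h2 := hC2 ε hε f hf
      have hcast : ((k+1 : ℕ):ℝ) • v = (k:ℝ) • v + v := by
        push_cast
        rw [add_smul, one_smul]
      rw [hcast]
      have key : G f ((k:ℝ) • v + v) - ((k+1:ℕ):ℝ) * G f v
          = (G f ((k:ℝ) • v + v) - G f ((k:ℝ) • v) - G f v)
            + (G f ((k:ℝ) • v) - (k:ℝ) * G f v) := by
        push_cast; ring
      rw [key]
      calc |_ + _| ≤ |G f ((k:ℝ) • v + v) - G f ((k:ℝ) • v) - G f v|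
            + |G f ((k:ℝ) • v) - (k:ℝ) * G f v| := abs_add_le _ _
        _ ≤ ε * C2 + ε * C1 := add_le_add h2 h1
        _ = ε * (C2 + C1) := by ring
  -- integer multiples
  have hGneg : ∀ (v : X), v ∈ Submodule.span ℝ D →
      ∃ C : ℝ, ∀ ε : ℝ, 0 ≤ ε → ∀ f : X → ℝ, Jen f ε →
        |G f (-v) + G f v| ≤ ε * C := by
    intro v hv
    obtain ⟨C, hC⟩ := hGadd v (-v) hv (neg_mem hv)
    refine ⟨C, fun ε hε f hf => ?_⟩
    have h := hC ε hε f hf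
    rw [add_neg_cancel, hG0 f] at h
    have : |G f (-v) + G f v| = |0 - G f v - G f (-v)| := by
      rw [show (0:ℝ) - G f v - G f (-v) = -(G f (-v) + G f v) by ring, abs_neg]
    rw [this]
    exact h
  have hGint : ∀ (k : ℤ) (v : X), v ∈ Submodule.span ℝ D →
      ∃ C : ℝ, ∀ ε : ℝ, 0 ≤ ε → ∀ f : X → ℝ, Jen f ε →
        |G f ((k:ℝ) • v) - (k:ℝ) * G f v| ≤ ε * C := by
    intro k v hv
    rcases le_or_gt 0 k with hk | hk
    · obtain ⟨n, rfl⟩ : ∃ n : ℕ, k = (n:ℤ) := ⟨k.toNat, by omega⟩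
      obtain ⟨C, hC⟩ := hGnat n v hv
      exact ⟨C, fun ε hε f hf => by simpa using hC ε hε f hf⟩
    · obtain ⟨n, rfl⟩ : ∃ n : ℕ, k = -(n:ℤ) := ⟨(-k).toNat, by omega⟩
      have hnv : (n:ℝ) • v ∈ Submodule.span ℝ D := Submodule.smul_mem _ _ hv
      obtain ⟨C1, hC1⟩ := hGnat n v hv
      obtain ⟨C2, hC2⟩ := hGneg ((n:ℝ) • v) hnv
      refine ⟨C2 + C1, fun ε hε f hf => ?_⟩
      have h1 := hC1 ε hε f hf
      have h2 := hC2 ε hε f hf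
      have hrw : ((-(n:ℤ) : ℤ):ℝ) • v = -((n:ℝ) • v) := by push_cast; rw [neg_smul]
      rw [hrw]
      have key : G f (-((n:ℝ) • v)) - ((-(n:ℤ) : ℤ):ℝ) * G f v
          = (G f (-((n:ℝ) • v)) + G f ((n:ℝ) • v))
            - (G f ((n:ℝ) • v) - (n:ℝ) * G f v) := by push_cast; ring
      rw [key]
      calc |_ - _| ≤ |G f (-((n:ℝ) • v)) + G f ((n:ℝ) • v)|
            + |G f ((n:ℝ) • v) - (n:ℝ) * G f v| := abs_sub _ _
        _ ≤ ε * C2 + ε * C1 := add_le_add h2 h1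
        _ = ε * (C2 + C1) := by ring
  -- rational multiples
  have hGrat : ∀ (q : ℚ) (v : X), v ∈ Submodule.span ℝ D →
      ∃ C : ℝ, ∀ ε : ℝ, 0 ≤ ε → ∀ f : X → ℝ, Jen f ε →
        |G f ((q:ℝ) • v) - (q:ℝ) * G f v| ≤ ε * C := by
    intro q v hv
    have hqv : (q:ℝ) • v ∈ Submodule.span ℝ D := Submodule.smul_mem _ _ hv
    obtain ⟨C1, hC1⟩ := hGint q.num v hv
    obtain ⟨C2, hC2⟩ := hGnat q.den ((q:ℝ) • v) hqv
    have hden : (0:ℝ) < (q.den : ℝ) := by exact_mod_cast q.pos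
    refine ⟨(C1 + C2) / (q.den : ℝ), fun ε hε f hf => ?_⟩
    have h1 := hC1 ε hε f hf
    have h2 := hC2 ε hε f hf
    have hdq : ((q.den : ℝ)) • ((q:ℝ) • v) = ((q.num : ℝ)) • v := by
      rw [smul_smul]
      congr 1
      push_cast
      rw [mul_comm]
      exact_mod_cast Rat.mul_den_eq_num q
    rw [hdq] at h2
    -- |q.den * G f (q•v) - q.num * G f v| ≤ ε * (C1 + C2)
    have h3 : |(q.den : ℝ) * G f ((q:ℝ) • v) - (q.num : ℝ) * G f v| ≤ ε * (C1 + C2) := by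
      have key : (q.den : ℝ) * G f ((q:ℝ) • v) - (q.num : ℝ) * G f v
          = (G f ((q.num : ℝ) • v) - (q.num : ℝ) * G f v)
            - (G f ((q.num : ℝ) • v) - (q.den : ℝ) * G f ((q:ℝ) • v)) := by ring
      rw [key]
      calc |_ - _| ≤ |G f ((q.num : ℝ) • v) - (q.num : ℝ) * G f v|
            + |G f ((q.num : ℝ) • v) - (q.den : ℝ) * G f ((q:ℝ) • v)| := abs_sub _ _
        _ ≤ ε * C1 + ε * C2 := add_le_add h1 h2
        _ = ε * (C1 + C2) := by ring
    have hq : (q:ℝ) = (q.num : ℝ) / (q.den : ℝ) := by exact_mod_cast (Rat.cast_def (K := ℝ) q)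
    have key2 : G f ((q:ℝ) • v) - (q:ℝ) * G f v
        = ((q.den : ℝ) * G f ((q:ℝ) • v) - (q.num : ℝ) * G f v) / (q.den : ℝ) := by
      rw [hq]
      field_simp
    rw [key2, abs_div, abs_of_pos hden, div_le_iff₀ hden]
    calc |(q.den : ℝ) * G f ((q:ℝ) • v) - (q.num : ℝ) * G f v| ≤ ε * (C1 + C2) := h3
      _ = ε * ((C1 + C2) / (q.den:ℝ)) * (q.den:ℝ) := by field_simp
  -- the rational span of the translated set
  set W : Submodule ℚ X := Submodule.span ℚ {u : X | d + u ∈ D} with hW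
  have hWV : ∀ z : X, z ∈ W → z ∈ Submodule.span ℝ D := by
    intro z hz
    have hsub : W ≤ (Submodule.span ℝ D).restrictScalars ℚ := by
      rw [hW]
      apply Submodule.span_le.mpr
      intro u hu
      have h1 : d + u ∈ Submodule.span ℝ D := Submodule.subset_span hu
      have h2 : d ∈ Submodule.span ℝ D := Submodule.subset_span hd
      have h3 : (d + u) - d = u := by abel
      have := sub_mem h1 h2
      rw [h3] at this
      exact this
    exact hsub hz
  set b : Module.Basis _ ℚ ↥W := Module.Basis.ofVectorSpace ℚ ↥W with hb
  set L : (X → ℝ) → (↥W →ₗ[ℚ] ℝ) :=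
    fun f => b.constr ℚ (fun i => G f ((b i : ↥W) : X)) with hL
  -- the main approximation claim on W
  have claim : ∀ z : ↥W, ∃ C : ℝ, ∀ ε : ℝ, 0 ≤ ε → ∀ f : X → ℝ, Jen f ε →
      |L f z - G f (z : X)| ≤ ε * C := by
    intro z
    have hz : z ∈ Submodule.span ℚ (Set.range ⇑b) := by rw [b.span_eq]; exact Submodule.mem_top
    refine Submodule.span_induction (p := fun z _ => ∃ C : ℝ, ∀ ε : ℝ, 0 ≤ ε →
      ∀ f : X → ℝ, Jen f ε → |L f z - G f (z : X)| ≤ ε * C) ?_ ?_ ?_ ?_ hz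
    · rintro x ⟨i, rfl⟩
      refine ⟨0, fun ε hε f hf => ?_⟩
      have : L f (b i) = G f ((b i : ↥W) : X) := by
        rw [hL]
        exact b.constr_basis ℚ _ i
      rw [this]
      simp
    · refine ⟨0, fun ε hε f hf => ?_⟩
      rw [map_zero]
      have : ((0 : ↥W) : X) = 0 := rfl
      rw [this, hG0 f]
      simp
    · rintro x y hx hy ⟨C1, h1⟩ ⟨C2, h2⟩
      obtain ⟨C3, h3⟩ := hGadd (x : X) (y : X) (hWV _ x.2) (hWV _ y.2)
      refine ⟨C1 + C2 + C3, fun ε hε f hf => ?_⟩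
      have e1 := h1 ε hε f hf
      have e2 := h2 ε hε f hf
      have e3 := h3 ε hε f hf
      have hcoe : ((x + y : ↥W) : X) = (x : X) + (y : X) := rfl
      rw [map_add, hcoe]
      have key : L f x + L f y - G f ((x : X) + (y : X))
          = (L f x - G f (x : X)) + (L f y - G f (y : X))
            - (G f ((x : X) + (y : X)) - G f (x : X) - G f (y : X)) := by ring
      rw [key]
      calc |_ - _| ≤ |(L f x - G f (x : X)) + (L f y - G f (y : X))|
            + |G f ((x : X) + (y : X)) - G f (x : X) - G f (y : X)| := abs_sub _ _
        _ ≤ (|L f x - G f (x : X)| + |L f y - G f (y : X)|)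
            + |G f ((x : X) + (y : X)) - G f (x : X) - G f (y : X)| := by
              linarith [abs_add_le (L f x - G f (x : X)) (L f y - G f (y : X))]
        _ ≤ (ε * C1 + ε * C2) + ε * C3 := by linarith
        _ = ε * (C1 + C2 + C3) := by ring
    · rintro q x hx ⟨C, hC⟩
      obtain ⟨Cq, hCq⟩ := hGrat q (x : X) (hWV _ x.2)
      refine ⟨|(q:ℝ)| * C + Cq, fun ε hε f hf => ?_⟩
      have e1 := hC ε hε f hf
      have e2 := hCq ε hε f hf
      have hcoe : ((q • x : ↥W) : X) = (q:ℝ) • (x : X) := by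
        have : ((q • x : ↥W) : X) = q • (x : X) := rfl
        rw [this, hqr]
      have hLs : L f (q • x) = (q:ℝ) * L f x := by
        rw [map_smul]
        rw [Rat.smul_def]
      rw [hcoe, hLs]
      have key : (q:ℝ) * L f x - G f ((q:ℝ) • (x : X))
          = (q:ℝ) * (L f x - G f (x : X))
            - (G f ((q:ℝ) • (x : X)) - (q:ℝ) * G f (x : X)) := by ring
      rw [key]
      calc |_ - _| ≤ |(q:ℝ) * (L f x - G f (x : X))|
            + |G f ((q:ℝ) • (x : X)) - (q:ℝ) * G f (x : X)| := abs_sub _ _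
        _ = |(q:ℝ)| * |L f x - G f (x : X)|
            + |G f ((q:ℝ) • (x : X)) - (q:ℝ) * G f (x : X)| := by rw [abs_mul]
        _ ≤ |(q:ℝ)| * (ε * C) + ε * Cq := by
              have := mul_le_mul_of_nonneg_left e1 (abs_nonneg (q:ℝ))
              linarith
        _ ≤ ε * (|(q:ℝ)| * C + Cq) := by nlinarith [abs_nonneg (q:ℝ)]
  -- membership of translated points
  have hmemW : ∀ x ∈ D, x - d ∈ W := by
    intro x hx
    apply Submodule.subset_span
    show d + (x - d) ∈ D
    have : d + (x - d) = x := by abel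
    rwa [this]
  -- the candidate Jensen function
  set a : (X → ℝ) → X → ℝ :=
    fun f x => f d + (if hx : x - d ∈ W then L f ⟨x - d, hx⟩ else 0) with ha
  -- a f is Jensen on D
  have haJ : ∀ f : X → ℝ, ∀ x ∈ D, ∀ y ∈ D,
      a f ((2:ℝ)⁻¹ • (x + y)) = (a f x + a f y) / 2 := by
    intro f x hx y hy
    have hxW := hmemW x hx
    have hyW := hmemW y hy
    have hid : (2:ℝ)⁻¹ • (x + y) - d = (2:ℝ)⁻¹ • ((x - d) + (y - d)) := by module
    have hid2 : (2:ℝ)⁻¹ • ((x - d) + (y - d)) = ((2⁻¹ : ℚ) : ℝ) • ((x - d) + (y - d)) := by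
      norm_num
    have hmW : (2:ℝ)⁻¹ • (x + y) - d ∈ W := by
      rw [hid, hid2, hqr]
      exact Submodule.smul_mem _ _ (add_mem hxW hyW)
    have hsub : (⟨(2:ℝ)⁻¹ • (x + y) - d, hmW⟩ : ↥W)
        = (2⁻¹ : ℚ) • ((⟨x - d, hxW⟩ : ↥W) + ⟨y - d, hyW⟩) := by
      apply Subtype.ext
      rw [Submodule.coe_smul, Submodule.coe_add]
      show (2:ℝ)⁻¹ • (x + y) - d = (2⁻¹ : ℚ) • ((x - d) + (y - d))
      rw [← hqr, ← hid2]
      exact hid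
    have hL1 : L f ⟨(2:ℝ)⁻¹ • (x + y) - d, hmW⟩
        = (L f ⟨x - d, hxW⟩ + L f ⟨y - d, hyW⟩) / 2 := by
      rw [hsub, map_smul, map_add, Rat.smul_def]
      push_cast
      ring
    rw [ha]
    simp only [dif_pos hmW, dif_pos hxW, dif_pos hyW, hL1]
    ring
  -- the pointwise error bound
  have hbound : ∀ x : X, ∃ C : ℝ, ∀ ε : ℝ, 0 ≤ ε → ∀ f : X → ℝ, Jen f ε →
      x ∈ D → |f x - a f x| ≤ ε * C := by
    intro x
    by_cases hx : x ∈ D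
    · have hxW := hmemW x hx
      obtain ⟨C1, h1⟩ := claim ⟨x - d, hxW⟩
      have hu : d + (x - d) ∈ D := by
        have : d + (x - d) = x := by abel
        rwa [this]
      refine ⟨((2:ℝ)^(nfun (x - d) + 1) - 2) + C1, fun ε hε f hf _ => ?_⟩
      have e1 := h1 ε hε f hf
      have e2 := lemS ε hε f hf (x - d) hu (nfun (x - d))
      have hdx : d + (x - d) = x := by abel
      rw [hdx] at e2
      -- e2 : |f x - f d - G f (x - d)| ≤ (2^(n+1) - 2) * ε    (by definition of G)
      have e2' : |(f x - f d) - G f (x - d)| ≤ ((2:ℝ)^(nfun (x-d)+1) - 2) * ε := by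
        rw [hG]
        exact e2
      have hax : a f x = f d + L f ⟨x - d, hxW⟩ := by
        rw [ha]
        simp only [dif_pos hxW]
      rw [hax]
      have key : f x - (f d + L f ⟨x - d, hxW⟩)
          = ((f x - f d) - G f (x - d))
            - (L f (⟨x - d, hxW⟩ : ↥W) - G f ((⟨x - d, hxW⟩ : ↥W) : X)) := by
        have : ((⟨x - d, hxW⟩ : ↥W) : X) = x - d := rfl
        rw [this]; ring
      rw [key]
      calc |_ - _| ≤ |(f x - f d) - G f (x - d)|
            + |L f (⟨x - d, hxW⟩ : ↥W) - G f ((⟨x - d, hxW⟩ : ↥W) : X)| := abs_sub _ _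
        _ ≤ ((2:ℝ)^(nfun (x-d)+1) - 2) * ε + ε * C1 := add_le_add e2' e1
        _ = ε * (((2:ℝ)^(nfun (x - d) + 1) - 2) + C1) := by ring
    · exact ⟨0, fun ε hε f hf hxD => absurd hxD hx⟩
  -- package everything
  choose η hη using hbound
  refine ⟨η, fun ε hε f hf => ⟨a f, haJ f, fun x hx => hη x ε hε f hf hx⟩⟩
end

section
/- Let D be a thick convex subset of a real vector space. Suppose that for every function f : D → ℝ that is ε-Jensen for some ε ≥ 0 there exists a Jensen function a : D → ℝ with sup_{x ∈ D} |f(x) − a(x)| < ∞. Then there exists a constant J ≥ 0, depending only on D, such that for every ε ≥ 0 and every ε-Jensen function f : D → ℝ there is a Jensen function a : D → ℝ with sup_{x ∈ D} |f(x) − a(x)| ≤ J·ε. -/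
open Filter Topology
open scoped ENNReal Classical

namespace Stmt14Aux

variable {X : Type*} [AddCommGroup X] [Module ℝ X]

theorem mid_mem {D : Set X} (hD : Convex ℝ D) {x y : X} (hx : x ∈ D) (hy : y ∈ D) :
    (2 : ℝ)⁻¹ • (x + y) ∈ D := by
  have h := hD hx hy (by norm_num : (0:ℝ) ≤ 1/2) (by norm_num : (0:ℝ) ≤ 1/2)
    (by norm_num : (1:ℝ)/2 + 1/2 = 1)
  have hrw : (2 : ℝ)⁻¹ • (x + y) = (1/2 : ℝ) • x + (1/2 : ℝ) • y := by
    rw [smul_add]; norm_num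
  rw [hrw]; exact h

variable (D : Set X) (hD : Convex ℝ D)

/-- midpoint inside `D` -/
noncomputable def mpt (p : ↥D × ↥D) : ↥D :=
  ⟨(2 : ℝ)⁻¹ • ((p.1 : X) + (p.2 : X)), mid_mem hD p.1.2 p.2.2⟩

theorem mpt_coe (p : ↥D × ↥D) :
    ((mpt D hD p : X)) = (2 : ℝ)⁻¹ • ((p.1 : X) + (p.2 : X)) := rfl

/-- the Jensen defect, pointwise -/
noncomputable def Tfun (u : ↥D → ℝ) : ↥D × ↥D → ℝ :=
  fun p => u (mpt D hD p) - (u p.1 + u p.2) / 2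

theorem Tfun_bound (u : lp (fun _ : ↥D => ℝ) ∞) (p : ↥D × ↥D) :
    ‖Tfun D hD (⇑u) p‖ ≤ 2 * ‖u‖ := by
  have h1 : ∀ i : ↥D, |u i| ≤ ‖u‖ := fun i => lp.norm_apply_le_norm ENNReal.top_ne_zero u i
  have h2 := h1 (mpt D hD p)
  have h3 := h1 p.1
  have h4 := h1 p.2
  simp only [Tfun, Real.norm_eq_abs]
  have := abs_add_le (u p.1) (u p.2)
  have h5 : |u (mpt D hD p) - (u p.1 + u p.2) / 2| ≤ |u (mpt D hD p)| + |(u p.1 + u p.2) / 2| :=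
    abs_sub _ _
  have h6 : |(u p.1 + u p.2) / 2| = |u p.1 + u p.2| / 2 := by
    rw [abs_div]; norm_num
  have h7 := abs_abs (u p.1)
  nlinarith [abs_nonneg (u p.1 + u p.2)]

theorem Tfun_memℓp (u : lp (fun _ : ↥D => ℝ) ∞) : Memℓp (Tfun D hD (⇑u)) ∞ := by
  apply memℓp_infty
  refine ⟨2 * ‖u‖, ?_⟩
  rintro r ⟨p, rfl⟩
  exact Tfun_bound D hD u p

/-- the Jensen defect operator as a continuous linear map between `ℓ∞` spaces -/
noncomputable def T : lp (fun _ : ↥D => ℝ) ∞ →L[ℝ] lp (fun _ : ↥D × ↥D => ℝ) ∞ :=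
  LinearMap.mkContinuous
    { toFun := fun u => ⟨Tfun D hD (⇑u), Tfun_memℓp D hD u⟩
      map_add' := by
        intro u v
        apply Subtype.ext
        funext p
        have hu : ⇑(u + v) = ⇑u + ⇑v := lp.coeFn_add u v
        simp only [Tfun, hu, Pi.add_apply]
        show _ = Tfun D hD (⇑u) p + Tfun D hD (⇑v) p
        simp only [Tfun]
        ring
      map_smul' := by
        intro c u
        apply Subtype.ext
        funext p
        have hu : ⇑(c • u) = c • ⇑u := lp.coeFn_smul c u
        simp only [Tfun, hu, Pi.smul_apply, RingHom.id_apply, smul_eq_mul]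
        show _ = c * Tfun D hD (⇑u) p
        simp only [Tfun]
        ring }
    2
    (by
      intro u
      apply lp.norm_le_of_forall_le (by positivity)
      intro p
      exact Tfun_bound D hD u p)

theorem T_apply (u : lp (fun _ : ↥D => ℝ) ∞) (p : ↥D × ↥D) :
    T D hD u p = u (mpt D hD p) - (u p.1 + u p.2) / 2 := rfl

/-- element of the free module recording a Jensen relation -/
noncomputable def qelt (p : ↥D × ↥D) : X →₀ ℝ :=
  Finsupp.single ((mpt D hD p : X)) 1
    - (2:ℝ)⁻¹ • (Finsupp.single ((p.1 : X)) 1 + Finsupp.single ((p.2 : X)) 1)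

theorem eval_qelt (h : X → ℝ) (p : ↥D × ↥D) :
    Finsupp.linearCombination ℝ h (qelt D hD p)
      = h ((2:ℝ)⁻¹ • ((p.1 : X) + (p.2 : X))) - (h (p.1 : X) + h (p.2 : X)) / 2 := by
  simp only [qelt, map_sub, map_smul, map_add, Finsupp.linearCombination_single, one_smul,
    smul_eq_mul, mpt_coe]
  ring

noncomputable def Phi : ((↥D × ↥D) →₀ ℝ) →ₗ[ℝ] (X →₀ ℝ) :=
  Finsupp.linearCombination ℝ (qelt D hD)

theorem Phi_single (p : ↥D × ↥D) : Phi D hD (Finsupp.single p 1) = qelt D hD p := by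
  simp [Phi]

/-- key linear-algebra step: if `w` satisfies all linear relations satisfied by Jensen
defects, then `w` is the Jensen defect of some function `f : X → ℝ`. -/
theorem exists_solution (w : ↥D × ↥D → ℝ)
    (hw : ∀ c : (↥D × ↥D) →₀ ℝ, Phi D hD c = 0 → Finsupp.linearCombination ℝ w c = 0) :
    ∃ f : X → ℝ, ∀ p : ↥D × ↥D,
      f ((2:ℝ)⁻¹ • ((p.1 : X) + (p.2 : X))) - (f (p.1 : X) + f (p.2 : X)) / 2 = w p := by
  have hker : LinearMap.ker (Phi D hD) ≤ LinearMap.ker (Finsupp.linearCombination ℝ w) :=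
    fun c hc => hw c hc
  set e := (Phi D hD).quotKerEquivRange with he
  set lam : ↥(LinearMap.range (Phi D hD)) →ₗ[ℝ] ℝ :=
    ((LinearMap.ker (Phi D hD)).liftQ (Finsupp.linearCombination ℝ w) hker).comp
      e.symm.toLinearMap with hlam
  obtain ⟨g, hg⟩ := lam.exists_extend
  refine ⟨fun z => g (Finsupp.single z 1), fun p => ?_⟩
  have h1 : g (Phi D hD (Finsupp.single p 1))
      = Finsupp.linearCombination ℝ w (Finsupp.single p 1) := by
    have h2 : e (Submodule.Quotient.mk (Finsupp.single p (1:ℝ)))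
        = ⟨Phi D hD (Finsupp.single p 1),
            LinearMap.mem_range_self (Phi D hD) _⟩ :=
      Subtype.ext ((Phi D hD).quotKerEquivRange_apply_mk _)
    have h3 : g (Phi D hD (Finsupp.single p 1))
        = lam ⟨Phi D hD (Finsupp.single p 1), LinearMap.mem_range_self (Phi D hD) _⟩ := by
      rw [← hg]; rfl
    rw [h3, ← h2, hlam]
    simp
  rw [Phi_single] at h1
  have h4 : g (qelt D hD p)
      = g (Finsupp.single ((2:ℝ)⁻¹ • ((p.1 : X) + (p.2 : X))) 1)
        - (g (Finsupp.single ((p.1 : X)) 1) + g (Finsupp.single ((p.2 : X)) 1)) / 2 := by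
    simp only [qelt, map_sub, map_smul, map_add, smul_eq_mul, mpt_coe]
    ring
  have h5 : Finsupp.linearCombination ℝ w (Finsupp.single p 1) = w p := by
    simp
  rw [h4, h5] at h1
  exact h1

/-- extension of a function on `D` by zero -/
noncomputable def ext0 (u : ↥D → ℝ) : X → ℝ :=
  fun z => if hz : z ∈ D then u ⟨z, hz⟩ else 0

omit [AddCommGroup X] [Module ℝ X] in
theorem ext0_coe (u : ↥D → ℝ) (x : ↥D) : ext0 D u (x : X) = u x := by
  simp only [ext0, x.2, dif_pos, Subtype.coe_eta]

theorem pairing_comm (u : lp (fun _ : ↥D => ℝ) ∞) (c : (↥D × ↥D) →₀ ℝ) :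
    Finsupp.linearCombination ℝ (fun p => T D hD u p) c
      = Finsupp.linearCombination ℝ (ext0 D (⇑u)) (Phi D hD c) := by
  induction c using Finsupp.induction_linear with
  | zero => simp
  | add f g hf hg => simp only [map_add, hf, hg]
  | single p r =>
    rw [Finsupp.linearCombination_single]
    simp only [Phi, Finsupp.linearCombination_single, map_smul]
    congr 1
    rw [eval_qelt, T_apply]
    rw [show ((2:ℝ)⁻¹ • ((p.1 : X) + (p.2 : X))) = ((mpt D hD p : X)) from rfl]
    rw [ext0_coe, ext0_coe, ext0_coe]

end Stmt14Aux

open Stmt14Aux Filter Topology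
open scoped ENNReal Classical

set_option maxHeartbeats 2000000 in
set_option synthInstance.maxHeartbeats 1000000 in
/-- Uniform boundedness for the Jensen equation on thick convex sets: if every
approximately Jensen function on `D` is at finite uniform distance from a Jensen
function, then there is a constant `J` such that every `ε`-Jensen function on `D` is
within uniform distance `J·ε` of a Jensen function. -/
theorem stmt_14 {X : Type*} [AddCommGroup X] [Module ℝ X] (D : Set X) (hD : Convex ℝ D)
    (hthick : ∃ d ∈ D, ∀ v ∈ Submodule.span ℝ D, ∃ δ : ℝ, 0 < δ ∧
      ∀ t : ℝ, 0 < t → t ≤ δ → d + t • v ∈ D ∧ d - t • v ∈ D)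
    (happrox : ∀ f : X → ℝ,
      (∃ ε : ℝ, 0 ≤ ε ∧ ∀ x ∈ D, ∀ y ∈ D,
        |f ((2 : ℝ)⁻¹ • (x + y)) - (f x + f y) / 2| ≤ ε) →
      ∃ a : X → ℝ,
        (∀ x ∈ D, ∀ y ∈ D, a ((2 : ℝ)⁻¹ • (x + y)) = (a x + a y) / 2) ∧
        ∃ C : ℝ, ∀ x ∈ D, |f x - a x| ≤ C) :
    ∃ J : ℝ, 0 ≤ J ∧ ∀ ε : ℝ, 0 ≤ ε → ∀ f : X → ℝ,
      (∀ x ∈ D, ∀ y ∈ D, |f ((2 : ℝ)⁻¹ • (x + y)) - (f x + f y) / 2| ≤ ε) →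
      ∃ a : X → ℝ,
        (∀ x ∈ D, ∀ y ∈ D, a ((2 : ℝ)⁻¹ • (x + y)) = (a x + a y) / 2) ∧
        ∀ x ∈ D, |f x - a x| ≤ J * ε := by
  classical
  -- Step 1: range of T is closed
  have hclosed : IsClosed ((LinearMap.range (T D hD : lp (fun _ : ↥D => ℝ) ∞ →ₗ[ℝ] lp (fun _ : ↥D × ↥D => ℝ) ∞) : Submodule ℝ (lp (fun _ : ↥D × ↥D => ℝ) ∞)) :
      Set (lp (fun _ : ↥D × ↥D => ℝ) ∞)) := by
    refine isClosed_of_closure_subset ?_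
    intro w hw
    obtain ⟨useq, huS, hulim⟩ := mem_closure_iff_seq_limit.mp hw
    choose v hv using fun n => (LinearMap.mem_range.mp (huS n))
    have hrel : ∀ c : (↥D × ↥D) →₀ ℝ, Phi D hD c = 0 →
        Finsupp.linearCombination ℝ (fun p => w p) c = 0 := by
      intro c hc
      have h0 : ∀ n, Finsupp.linearCombination ℝ (fun p => (useq n) p) c = 0 := by
        intro n
        rw [← (by exact hv n : T D hD (v n) = useq n), pairing_comm D hD (v n) c, hc, map_zero]
      have hpt : ∀ p, Tendsto (fun n => (useq n) p) atTop (𝓝 (w p)) := by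
        intro p
        have hb : ∀ n, ‖(useq n) p - w p‖ ≤ ‖useq n - w‖ := by
          intro n
          have h := lp.norm_apply_le_norm ENNReal.top_ne_zero (useq n - w) p
          simpa [lp.coeFn_sub] using h
        have h2 : Tendsto (fun n => ‖useq n - w‖) atTop (𝓝 0) := by
          have := tendsto_iff_norm_sub_tendsto_zero.mp hulim
          simpa using this
        have h3 := squeeze_zero_norm hb h2
        have h4 := h3.add_const (w p)
        simpa using h4
      have hconv : Tendsto (fun n => Finsupp.linearCombination ℝ (fun p => (useq n) p) c)
          atTop (𝓝 (Finsupp.linearCombination ℝ (fun p => w p) c)) := by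
        simp only [Finsupp.linearCombination_apply, Finsupp.sum]
        exact tendsto_finset_sum _ fun p _ => (hpt p).const_smul (c p)
      rw [show (fun n => Finsupp.linearCombination ℝ (fun p => (useq n) p) c)
          = (fun _ : ℕ => (0:ℝ)) from funext h0] at hconv
      exact tendsto_nhds_unique hconv tendsto_const_nhds
    obtain ⟨f, hf⟩ := exists_solution D hD (fun p => w p) hrel
    obtain ⟨a, haJ, C₀, hC₀⟩ := happrox f (by
      refine ⟨‖w‖, norm_nonneg _, fun x hx y hy => ?_⟩
      have h := hf (⟨x, hx⟩, ⟨y, hy⟩)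
      simp only at h
      rw [h]
      have := lp.norm_apply_le_norm ENNReal.top_ne_zero w (⟨x, hx⟩, ⟨y, hy⟩)
      simpa [Real.norm_eq_abs] using this)
    have hmem : Memℓp (fun z : ↥D => f (z : X) - a (z : X)) ∞ := by
      apply memℓp_infty
      refine ⟨C₀, ?_⟩
      rintro r ⟨z, rfl⟩
      simpa [Real.norm_eq_abs] using hC₀ (z : X) z.2
    refine LinearMap.mem_range.mpr ⟨⟨_, hmem⟩, ?_⟩
    apply lp.ext
    funext p
    have hTp : T D hD (⟨_, hmem⟩ : lp (fun _ : ↥D => ℝ) ∞) p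
        = (f ((mpt D hD p : X)) - a ((mpt D hD p : X)))
          - ((f (p.1 : X) - a (p.1 : X)) + (f (p.2 : X) - a (p.2 : X))) / 2 := rfl
    have ha0 : a ((2:ℝ)⁻¹ • ((p.1 : X) + (p.2 : X))) = (a (p.1 : X) + a (p.2 : X)) / 2 :=
      haJ _ p.1.2 _ p.2.2
    have hfp := hf p
    show T D hD (⟨_, hmem⟩ : lp (fun _ : ↥D => ℝ) ∞) p = w p
    rw [hTp, mpt_coe, ha0, ← hfp]
    ring
  -- Step 2: open mapping theorem
  set S : Submodule ℝ (lp (fun _ : ↥D × ↥D => ℝ) ∞) := LinearMap.range (T D hD : lp (fun _ : ↥D => ℝ) ∞ →ₗ[ℝ] lp (fun _ : ↥D × ↥D => ℝ) ∞) with hS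
  haveI : CompleteSpace S := IsClosed.completeSpace_coe (hs := hclosed)
  set T' : lp (fun _ : ↥D => ℝ) ∞ →L[ℝ] S :=
    (T D hD).codRestrict S (fun u => LinearMap.mem_range_self _ u) with hT'
  have hsurj : Function.Surjective T' := by
    rintro ⟨y, hy⟩
    obtain ⟨x, hx⟩ := LinearMap.mem_range.mp hy
    exact ⟨x, Subtype.ext hx⟩
  obtain ⟨C, hCpos, hC⟩ := T'.exists_preimage_norm_le hsurj
  refine ⟨C, le_of_lt hCpos, ?_⟩
  intro ε hε f hf
  obtain ⟨a₀, ha₀J, C₀, hC₀⟩ := happrox f ⟨ε, hε, hf⟩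
  have hmem : Memℓp (fun z : ↥D => f (z : X) - a₀ (z : X)) ∞ := by
    apply memℓp_infty
    refine ⟨C₀, ?_⟩
    rintro r ⟨z, rfl⟩
    simpa [Real.norm_eq_abs] using hC₀ (z : X) z.2
  set h₀ : lp (fun _ : ↥D => ℝ) ∞ := ⟨_, hmem⟩ with hh₀
  obtain ⟨u, hu, hunorm⟩ := hC (T' h₀)
  have hnorm : ‖T D hD h₀‖ ≤ ε := by
    apply lp.norm_le_of_forall_le hε
    intro p
    have hTp : T D hD h₀ p
        = (f ((mpt D hD p : X)) - a₀ ((mpt D hD p : X)))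
          - ((f (p.1 : X) - a₀ (p.1 : X)) + (f (p.2 : X) - a₀ (p.2 : X))) / 2 := rfl
    have ha0 : a₀ ((2:ℝ)⁻¹ • ((p.1 : X) + (p.2 : X))) = (a₀ (p.1 : X) + a₀ (p.2 : X)) / 2 :=
      ha₀J _ p.1.2 _ p.2.2
    have hfb := hf (p.1 : X) p.1.2 (p.2 : X) p.2.2
    rw [Real.norm_eq_abs, hTp, mpt_coe, ha0]
    calc |f ((2:ℝ)⁻¹ • ((p.1 : X) + (p.2 : X))) - (a₀ (p.1 : X) + a₀ (p.2 : X)) / 2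
          - ((f (p.1 : X) - a₀ (p.1 : X)) + (f (p.2 : X) - a₀ (p.2 : X))) / 2|
        = |f ((2:ℝ)⁻¹ • ((p.1 : X) + (p.2 : X))) - (f (p.1 : X) + f (p.2 : X)) / 2| := by
          congr 1; ring
      _ ≤ ε := hfb
  have hTnorm : ‖T' h₀‖ = ‖T D hD h₀‖ := rfl
  have hunorm' : ‖u‖ ≤ C * ε := by
    calc ‖u‖ ≤ C * ‖T' h₀‖ := hunorm
      _ = C * ‖T D hD h₀‖ := by rw [hTnorm]
      _ ≤ C * ε := mul_le_mul_of_nonneg_left hnorm (le_of_lt hCpos)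
  have hkerd : T D hD (h₀ - u) = 0 := by
    have h1 : T D hD u = T D hD h₀ := congrArg Subtype.val hu
    rw [map_sub, h1, sub_self]
  refine ⟨fun z => a₀ z + (if hz : z ∈ D then (h₀ - u) (⟨z, hz⟩ : ↥D) else 0), ?_, ?_⟩
  · intro x hx y hy
    have hmid : (2:ℝ)⁻¹ • (x + y) ∈ D := mid_mem hD hx hy
    simp only [dif_pos hmid, dif_pos hx, dif_pos hy]
    have ha0 : a₀ ((2:ℝ)⁻¹ • (x + y)) = (a₀ x + a₀ y) / 2 := ha₀J x hx y hy
    have h1 : T D hD (h₀ - u) ((⟨x, hx⟩ : ↥D), (⟨y, hy⟩ : ↥D)) = 0 := by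
      rw [hkerd]
      exact congrFun (lp.coeFn_zero _ _) _
    rw [T_apply] at h1
    have hmm : (mpt D hD ((⟨x, hx⟩ : ↥D), (⟨y, hy⟩ : ↥D))) = (⟨(2:ℝ)⁻¹ • (x + y), hmid⟩ : ↥D) :=
      Subtype.ext rfl
    rw [hmm] at h1
    rw [ha0]
    have h2 : (h₀ - u) (⟨(2:ℝ)⁻¹ • (x + y), hmid⟩ : ↥D)
        = ((h₀ - u) (⟨x, hx⟩ : ↥D) + (h₀ - u) (⟨y, hy⟩ : ↥D)) / 2 := by
      linarith [h1]
    rw [h2]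
    ring
  · intro z hz
    simp only [dif_pos hz]
    have hsub : (h₀ - u) (⟨z, hz⟩ : ↥D) = h₀ (⟨z, hz⟩ : ↥D) - u (⟨z, hz⟩ : ↥D) := by
      rw [lp.coeFn_sub]; rfl
    have hh0z : h₀ (⟨z, hz⟩ : ↥D) = f z - a₀ z := rfl
    have hrw : f z - (a₀ z + (h₀ - u) (⟨z, hz⟩ : ↥D)) = u (⟨z, hz⟩ : ↥D) := by
      rw [hsub, hh0z]; ring
    rw [hrw]
    calc |u (⟨z, hz⟩ : ↥D)| ≤ ‖u‖ := by
          simpa [Real.norm_eq_abs] using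
            lp.norm_apply_le_norm ENNReal.top_ne_zero u (⟨z, hz⟩ : ↥D)
      _ ≤ C * ε := hunorm'
end

section
/- Let D be a thick convex subset of a real vector space. Suppose that for every function f : D → ℝ that is ε-affine for some ε ≥ 0 there exists an affine function a : D → ℝ with sup_{x ∈ D} |f(x) − a(x)| < ∞. Then there exists a constant A ≥ 0, depending only on D, such that for every ε ≥ 0 and every ε-affine function f : D → ℝ there is an affine function a : D → ℝ with sup_{x ∈ D} |f(x) − a(x)| ≤ A·ε. -/
open Finset

section AUX
variable {X : Type*} [AddCommGroup X] [Module ℝ X]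

/-- defect predicate -/
def Def1 (D : Set X) (f : X → ℝ) (ε : ℝ) : Prop :=
  ∀ x ∈ D, ∀ y ∈ D, ∀ t : ℝ, 0 ≤ t → t ≤ 1 →
    |f (t • x + (1 - t) • y) - t * f x - (1 - t) * f y| ≤ ε

theorem Def1.mono {D : Set X} {f : X → ℝ} {ε ε' : ℝ} (h : Def1 D f ε) (hle : ε ≤ ε') :
    Def1 D f ε' := fun x hx y hy t ht ht1 => (h x hx y hy t ht ht1).trans hle

theorem Def1.add {D : Set X} {f g : X → ℝ} {ε ε' : ℝ} (hf : Def1 D f ε) (hg : Def1 D g ε') :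
    Def1 D (f + g) (ε + ε') := by
  intro x hx y hy t ht ht1
  have h1 := hf x hx y hy t ht ht1
  have h2 := hg x hx y hy t ht ht1
  simp only [Pi.add_apply]
  calc |f (t • x + (1 - t) • y) + g (t • x + (1 - t) • y) - t * (f x + g x) -
        (1 - t) * (f y + g y)|
      = |(f (t • x + (1 - t) • y) - t * f x - (1 - t) * f y) +
          (g (t • x + (1 - t) • y) - t * g x - (1 - t) * g y)| := by ring_nf
    _ ≤ _ := (abs_add_le _ _).trans (add_le_add h1 h2)

theorem Def1.smul {D : Set X} {f : X → ℝ} {ε : ℝ} (c : ℝ) (hf : Def1 D f ε) :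
    Def1 D (fun x => c * f x) (|c| * ε) := by
  intro x hx y hy t ht ht1
  have h1 := hf x hx y hy t ht ht1
  calc |c * f (t • x + (1 - t) • y) - t * (c * f x) - (1 - t) * (c * f y)|
      = |c| * |f (t • x + (1 - t) • y) - t * f x - (1 - t) * f y| := by
        rw [← abs_mul]; ring_nf
    _ ≤ |c| * ε := mul_le_mul_of_nonneg_left h1 (abs_nonneg c)

theorem Def1.neg {D : Set X} {f : X → ℝ} {ε : ℝ} (hf : Def1 D f ε) :
    Def1 D (-f) ε := by
  intro x hx y hy t ht ht1
  have h := hf x hx y hy t ht ht1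
  simp only [Pi.neg_apply]
  calc |-f (t • x + (1 - t) • y) - t * -f x - (1 - t) * -f y|
      = |f (t • x + (1 - t) • y) - t * f x - (1 - t) * f y| := by
        rw [← abs_neg]; ring_nf
    _ ≤ ε := h

theorem Def1.sub {D : Set X} {f g : X → ℝ} {ε ε' : ℝ} (hf : Def1 D f ε) (hg : Def1 D g ε') :
    Def1 D (f - g) (ε + ε') := by
  have := hf.add hg.neg
  simpa [sub_eq_add_neg] using this

/-- iterated Jensen -/
theorem jensen {D : Set X} (hD : Convex ℝ D) {f : X → ℝ} {ε : ℝ}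
    (hf : Def1 D f ε) (hε : 0 ≤ ε) {ι : Type*} (s : Finset ι) (w : ι → ℝ) (p : ι → X)
    (hw : ∀ i ∈ s, 0 ≤ w i) (hw1 : ∑ i ∈ s, w i = 1) (hp : ∀ i ∈ s, p i ∈ D) :
    |f (∑ i ∈ s, w i • p i) - ∑ i ∈ s, w i * f (p i)| ≤ s.card * ε := by
  classical
  induction s using Finset.strongInduction generalizing w with
  | _ s IH =>
    rcases s.eq_empty_or_nonempty with rfl | ⟨i, hi⟩
    · simp at hw1
    · set t := s.erase i with ht
      have hts : t ⊂ s := Finset.erase_ssubset hi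
      have hsum : w i + ∑ j ∈ t, w j = 1 := by
        rw [ht, Finset.add_sum_erase s w hi]; exact hw1
      set W : ℝ := ∑ j ∈ t, w j with hW
      have hWnn : 0 ≤ W := Finset.sum_nonneg fun j hj => hw j (Finset.mem_of_mem_erase hj)
      rcases eq_or_lt_of_le hWnn with hW0 | hWpos
      · -- W = 0, all weights in t vanish, w i = 1
        have hwi : w i = 1 := by rw [← hsum, ← hW0]; ring
        have hzero : ∀ j ∈ t, w j = 0 := by
          intro j hj
          have := (Finset.sum_eq_zero_iff_of_nonneg
            (fun k hk => hw k (Finset.mem_of_mem_erase hk))).1 hW0.symm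
          exact this j hj
        have hptsum : ∑ j ∈ s, w j • p j = p i := by
          rw [← Finset.add_sum_erase s _ hi, hwi, one_smul, Finset.sum_eq_zero, add_zero]
          intro j hj; rw [hzero j hj, zero_smul]
        have hvalsum : ∑ j ∈ s, w j * f (p j) = f (p i) := by
          rw [← Finset.add_sum_erase s _ hi, hwi, one_mul, Finset.sum_eq_zero, add_zero]
          intro j hj; rw [hzero j hj, zero_mul]
        rw [hptsum, hvalsum, sub_self, abs_zero]
        positivity
      · -- W > 0
        have hWne : W ≠ 0 := ne_of_gt hWpos
        set w' : ι → ℝ := fun j => w j / W with hw'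
        have hw'nn : ∀ j ∈ t, 0 ≤ w' j := fun j hj =>
          div_nonneg (hw j (Finset.mem_of_mem_erase hj)) hWnn
        have hw'1 : ∑ j ∈ t, w' j = 1 := by
          rw [hw']; rw [← Finset.sum_div]; exact div_self hWne
        set y : X := ∑ j ∈ t, w' j • p j with hy
        have hyD : y ∈ D := hD.sum_mem hw'nn hw'1 fun j hj => hp j (Finset.mem_of_mem_erase hj)
        have hWy : W • y = ∑ j ∈ t, w j • p j := by
          rw [hy, Finset.smul_sum]
          refine Finset.sum_congr rfl fun j hj => ?_
          rw [smul_smul, hw', mul_div_cancel₀ _ hWne]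
        have hwi1 : w i = 1 - W := by linarith [hsum]
        have hwile : w i ≤ 1 := by nlinarith
        have hwinn : 0 ≤ w i := hw i hi
        have hcombo : ∑ j ∈ s, w j • p j = w i • p i + (1 - w i) • y := by
          rw [← Finset.add_sum_erase s _ hi, ← hWy]
          have : (1 : ℝ) - w i = W := by linarith
          rw [this]
        have hdef := hf (p i) (hp i hi) y hyD (w i) hwinn hwile
        rw [← hcombo] at hdef
        have hIH := IH t hts w' hw'nn hw'1 (fun j hj => hp j (Finset.mem_of_mem_erase hj))
        rw [← hy] at hIH
        have hcard : (t.card : ℝ) ≤ (s.card : ℝ) - 1 := by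
          rw [ht, Finset.card_erase_of_mem hi]
          have h1 : 1 ≤ s.card := Finset.card_pos.2 ⟨i, hi⟩
          have := Nat.cast_sub h1 (R := ℝ)
          simp at this
          rw [this]
        have hvals : ∑ j ∈ s, w j * f (p j) = w i * f (p i) + W * ∑ j ∈ t, w' j * f (p j) := by
          rw [← Finset.add_sum_erase s _ hi, Finset.mul_sum]
          congr 1
          refine Finset.sum_congr rfl fun j hj => ?_
          rw [hw']
          field_simp
        have hWle : W ≤ 1 := by linarith
        obtain ⟨Q, hQ⟩ : ∃ Q : ℝ, Q = ∑ j ∈ t, w' j * f (p j) := ⟨_, rfl⟩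
        rw [← hQ] at hvals hIH
        have key : |f (∑ j ∈ s, w j • p j) - ∑ j ∈ s, w j * f (p j)| ≤ ε + W * (t.card * ε) := by
          rw [hvals]
          have h2 : |W * (f y - Q)| ≤ W * (t.card * ε) := by
            rw [abs_mul, abs_of_nonneg hWnn]
            exact mul_le_mul_of_nonneg_left hIH hWnn
          calc |f (∑ j ∈ s, w j • p j) - (w i * f (p i) + W * Q)|
              = |(f (∑ j ∈ s, w j • p j) - w i * f (p i) - (1 - w i) * f y) +
                  (W * (f y - Q))| := by
                rw [hwi1]; ring_nf
            _ ≤ |f (∑ j ∈ s, w j • p j) - w i * f (p i) - (1 - w i) * f y| +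
                  |W * (f y - Q)| := abs_add_le _ _
            _ ≤ ε + W * (t.card * ε) := add_le_add hdef h2
        refine key.trans ?_
        have hc : W * ((t.card : ℝ) * ε) ≤ 1 * (((s.card : ℝ) - 1) * ε) := by
          apply mul_le_mul hWle _ (by positivity) zero_le_one
          exact mul_le_mul_of_nonneg_right hcard hε
        nlinarith [hc]

noncomputable section ANCHOR

variable (D : Set X) (d : X)

open Classical in
/-- representation finsupp of `x - d` in the basis of the span -/
def rep (x : X) : (Module.Basis.ofVectorSpaceIndex ℝ (Submodule.span ℝ D)) →₀ ℝ :=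
  if h : x - d ∈ Submodule.span ℝ D then
    (Module.Basis.ofVectorSpace ℝ (Submodule.span ℝ D)).repr ⟨x - d, h⟩ else 0

variable (tw : (Module.Basis.ofVectorSpaceIndex ℝ (Submodule.span ℝ D)) → ℝ)

/-- base point of index i -/
def qpt (i : (Module.Basis.ofVectorSpaceIndex ℝ (Submodule.span ℝ D))) : X :=
  d + tw i • ((Module.Basis.ofVectorSpace ℝ (Submodule.span ℝ D) i : Submodule.span ℝ D) : X)

/-- anchored affine approximation of `u` -/
def aff (u : X → ℝ) : X → ℝ := fun x =>
  u d + Finsupp.linearCombination ℝ (fun i => (u (qpt D d tw i) - u d) / tw i) (rep D d x)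

theorem aff_sub (u v : X → ℝ) (x : X) :
    aff D d tw (fun y => u y - v y) x = aff D d tw u x - aff D d tw v x := by
  simp only [aff]
  rw [Finsupp.linearCombination_apply, Finsupp.linearCombination_apply,
    Finsupp.linearCombination_apply]
  rw [show (rep D d x).sum (fun i c => c • ((u (qpt D d tw i) - v (qpt D d tw i) - (u d - v d)) / tw i))
      = (rep D d x).sum fun i c =>
        c • ((u (qpt D d tw i) - u d) / tw i) - c • ((v (qpt D d tw i) - v d) / tw i) from ?_]
  · rw [Finsupp.sum_sub]
    ring
  · apply Finsupp.sum_congr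
    intro i _
    rw [smul_eq_mul, smul_eq_mul, smul_eq_mul]
    ring

theorem rep_mem (hd : d ∈ D) (x : X) (hx : x ∈ D) : x - d ∈ Submodule.span ℝ D :=
  sub_mem (Submodule.subset_span hx) (Submodule.subset_span hd)

theorem aff_affine (hd : d ∈ D) (u : X → ℝ) :
    ∀ x ∈ D, ∀ y ∈ D, ∀ t : ℝ, 0 ≤ t → t ≤ 1 →
      aff D d tw u (t • x + (1 - t) • y) = t * aff D d tw u x + (1 - t) * aff D d tw u y := by
  intro x hx y hy t _ _
  have hx' : x - d ∈ Submodule.span ℝ D := rep_mem D d hd x hx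
  have hy' : y - d ∈ Submodule.span ℝ D := rep_mem D d hd y hy
  have hz' : t • x + (1 - t) • y - d ∈ Submodule.span ℝ D := by
    have : t • x + (1 - t) • y - d = t • (x - d) + (1 - t) • (y - d) := by module
    rw [this]
    exact Submodule.add_mem _ (Submodule.smul_mem _ _ hx') (Submodule.smul_mem _ _ hy')
  have hrep : rep D d (t • x + (1 - t) • y) = t • rep D d x + (1 - t) • rep D d y := by
    simp only [rep, dif_pos hx', dif_pos hy', dif_pos hz']
    have : (⟨t • x + (1 - t) • y - d, hz'⟩ : Submodule.span ℝ D)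
        = t • (⟨x - d, hx'⟩ : Submodule.span ℝ D) + (1 - t) • ⟨y - d, hy'⟩ := by
      ext
      push_cast
      module
    rw [this, map_add, map_smul, map_smul]
  simp only [aff, hrep, map_add, map_smul, smul_eq_mul]
  ring

theorem aff_pointwise (hD : Convex ℝ D) (hd : d ∈ D)
    (htw : ∀ i, 0 < tw i ∧ qpt D d tw i ∈ D ∧
      d - tw i • ((Module.Basis.ofVectorSpace ℝ (Submodule.span ℝ D) i : Submodule.span ℝ D) : X) ∈ D)
    (x : X) (hx : x ∈ D) :
    ∃ K : ℝ, 0 ≤ K ∧ ∀ (u : X → ℝ) (ε : ℝ), Def1 D u ε → 0 ≤ ε →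
      |u x - aff D d tw u x| ≤ K * ε := by
  classical
  have hx' : x - d ∈ Submodule.span ℝ D := rep_mem D d hd x hx
  set B := Module.Basis.ofVectorSpace ℝ (Submodule.span ℝ D) with hB
  set c := rep D d x with hc
  set S := c.support with hS
  set γ : _ → ℝ := fun i => c i / tw i with hγ
  set T : ℝ := ∑ i ∈ S, |γ i| with hT
  have hTnn : 0 ≤ T := Finset.sum_nonneg fun i _ => abs_nonneg _
  refine ⟨2 * (1 + T) + T * S.card + 2 * T, by positivity, ?_⟩
  intro u ε hu hε
  -- basic representation identity
  have hcrep : c = B.repr ⟨x - d, hx'⟩ := by rw [hc, rep, dif_pos hx']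
  have hsum : ∑ i ∈ S, c i • ((B i : Submodule.span ℝ D) : X) = x - d := by
    have h0 : (Finsupp.linearCombination ℝ (⇑B)) (B.repr ⟨x - d, hx'⟩) = ⟨x - d, hx'⟩ :=
      Module.Basis.linearCombination_repr B _
    rw [Finsupp.linearCombination_apply, Finsupp.sum] at h0
    have h1 := congrArg (Subtype.val) h0
    rw [Submodule.coe_sum] at h1
    simp only [SetLike.val_smul] at h1
    rw [← hcrep] at h1
    exact h1
  -- the reflected points
  set p : _ → X := fun i => if 0 ≤ γ i then qpt D d tw i
      else d - tw i • ((B i : Submodule.span ℝ D) : X) with hp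
  have hpD : ∀ i, p i ∈ D := by
    intro i
    simp only [hp]
    split
    · exact (htw i).2.1
    · exact (htw i).2.2
  have hkey : ∀ i ∈ S, |γ i| • (p i - d) = c i • ((B i : Submodule.span ℝ D) : X) := by
    intro i _
    have htwi := (htw i).1
    have hci : c i = γ i * tw i := by
      rw [hγ]; field_simp
    simp only [hp]
    by_cases hgi : 0 ≤ γ i
    · rw [if_pos hgi, abs_of_nonneg hgi, qpt, hci]
      module
    · rw [if_neg hgi, abs_of_neg (lt_of_not_ge hgi), hci]
      module
  have hxd : x - d = ∑ i ∈ S, |γ i| • (p i - d) := by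
    rw [Finset.sum_congr rfl hkey, hsum]
  rcases eq_or_lt_of_le hTnn with hT0 | hTpos
  · -- degenerate case : x = d
    have hzero : ∀ i ∈ S, |γ i| = 0 := by
      intro i hi
      exact (Finset.sum_eq_zero_iff_of_nonneg (fun j _ => abs_nonneg _)).1 hT0.symm i hi
    have hxd0 : x = d := by
      have h0 : x - d = 0 := by
        rw [hxd, Finset.sum_eq_zero]
        intro i hi; rw [hzero i hi, zero_smul]
      exact sub_eq_zero.1 h0
    have hmem0 : d - d ∈ Submodule.span ℝ D := by
      rw [sub_self]; exact Submodule.zero_mem _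
    have hrep0 : rep D d d = 0 := by
      rw [rep, dif_pos hmem0]
      have : (⟨d - d, hmem0⟩ : Submodule.span ℝ D) = 0 := by
        ext; simp
      rw [this, map_zero]
    have haffd : aff D d tw u d = u d := by
      rw [aff, hrep0, map_zero, add_zero]
    rw [hxd0, haffd, sub_self, abs_zero]
    exact mul_nonneg (by nlinarith [hTnn, (Nat.cast_nonneg S.card : (0:ℝ) ≤ S.card)]) hε
  · -- main case
    set t : ℝ := 1 / (1 + T) with htdef
    have h1T : (0:ℝ) < 1 + T := by linarith
    have ht0 : 0 ≤ t := by positivity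
    have ht1 : t ≤ 1 := by
      rw [htdef, div_le_one h1T]; linarith
    have hTne : T ≠ 0 := ne_of_gt hTpos
    set w : _ → ℝ := fun i => |γ i| / T with hw
    have hwnn : ∀ i ∈ S, 0 ≤ w i := fun i _ => div_nonneg (abs_nonneg _) hTnn
    have hw1 : ∑ i ∈ S, w i = 1 := by
      simp only [hw]
      rw [← Finset.sum_div, ← hT, div_self hTne]
    set y := ∑ i ∈ S, w i • p i with hy
    have hyD : y ∈ D := hD.sum_mem hwnn hw1 (fun i _ => hpD i)
    have h1t : 1 - t = t * T := by rw [htdef]; field_simp; ring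
    have hyT : T • y = ∑ i ∈ S, |γ i| • p i := by
      rw [hy, Finset.smul_sum]
      refine Finset.sum_congr rfl fun i _ => ?_
      rw [smul_smul, hw]
      rw [mul_div_cancel₀ _ hTne]
    have hxe : x = (∑ i ∈ S, |γ i| • p i) - T • d + d := by
      have hsplit : ∑ i ∈ S, |γ i| • (p i - d) = (∑ i ∈ S, |γ i| • p i) - T • d := by
        rw [hT, Finset.sum_smul]
        rw [← Finset.sum_sub_distrib]
        refine Finset.sum_congr rfl fun i _ => ?_
        rw [smul_sub]
      have h0 := hxd
      rw [hsplit] at h0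
      exact sub_eq_iff_eq_add.mp h0
    have hcombo : t • d + (1 - t) • y = t • x + (1 - t) • d := by
      rw [h1t, mul_smul, hyT, hxe]
      module
    -- estimates
    have e1 := hu x hx d hd t ht0 ht1
    have e2 := hu d hd y hyD t ht0 ht1
    rw [hcombo] at e2
    have e3 := jensen hD hu hε S w p hwnn hw1 (fun i _ => hpD i)
    rw [← hy] at e3
    have haffx : aff D d tw u x = u d + ∑ i ∈ S, γ i * (u (qpt D d tw i) - u d) := by
      rw [aff, Finsupp.linearCombination_apply, Finsupp.sum, ← hc, ← hS]
      congr 1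
      refine Finset.sum_congr rfl fun i _ => ?_
      rw [smul_eq_mul, hγ]
      ring
    have e4 : ∀ i ∈ S, |(|γ i|) * (u (p i) - u d) - γ i * (u (qpt D d tw i) - u d)| ≤
        2 * |γ i| * ε := by
      intro i _
      by_cases hgi : 0 ≤ γ i
      · simp only [hp, if_pos hgi]
        rw [abs_of_nonneg hgi, sub_self, abs_zero]
        positivity
      · have hqm := (htw i).2.1
        have hq'm := (htw i).2.2
        have hmid : (1/2 : ℝ) • (qpt D d tw i) + (1 - 1/2 : ℝ) • (d - tw i • ((B i : Submodule.span ℝ D) : X)) = d := by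
          have h12 : (1:ℝ) - 1/2 = 1/2 := by norm_num
          rw [qpt, h12]
          module
        have hmd := hu (qpt D d tw i) hqm (d - tw i • ((B i : Submodule.span ℝ D) : X)) hq'm
          (1/2) (by norm_num) (by norm_num)
        rw [hmid] at hmd
        simp only [hp, if_neg hgi]
        have hga : |γ i| = -γ i := abs_of_neg (lt_of_not_ge hgi)
        have h2 : |u (d - tw i • ((B i : Submodule.span ℝ D) : X)) + u (qpt D d tw i) - 2 * u d|
            ≤ 2 * ε := by
          rw [abs_le] at hmd ⊢
          constructor <;> linarith [hmd.1, hmd.2]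
        calc |(|γ i|) * (u (d - tw i • ((B i : Submodule.span ℝ D) : X)) - u d) -
              γ i * (u (qpt D d tw i) - u d)|
            = |(-γ i) * (u (d - tw i • ((B i : Submodule.span ℝ D) : X)) + u (qpt D d tw i) - 2 * u d)| := by
              rw [show (|γ i|) * (u (d - tw i • ((B i : Submodule.span ℝ D) : X)) - u d) -
                  γ i * (u (qpt D d tw i) - u d) =
                  (-γ i) * (u (d - tw i • ((B i : Submodule.span ℝ D) : X)) + u (qpt D d tw i)
                    - 2 * u d) from by rw [hga]; ring]
          _ = |γ i| * |u (d - tw i • ((B i : Submodule.span ℝ D) : X)) + u (qpt D d tw i) - 2 * u d| := by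
              rw [abs_mul, abs_neg]
          _ ≤ |γ i| * (2 * ε) := mul_le_mul_of_nonneg_left h2 (abs_nonneg _)
          _ = 2 * |γ i| * ε := by ring
    have e4s : |∑ i ∈ S, |γ i| * (u (p i) - u d) - ∑ i ∈ S, γ i * (u (qpt D d tw i) - u d)|
        ≤ 2 * T * ε := by
      rw [← Finset.sum_sub_distrib]
      refine (Finset.abs_sum_le_sum_abs _ _).trans ?_
      calc ∑ i ∈ S, |(|γ i|) * (u (p i) - u d) - γ i * (u (qpt D d tw i) - u d)|
          ≤ ∑ i ∈ S, 2 * |γ i| * ε := Finset.sum_le_sum e4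
        _ = 2 * T * ε := by
            rw [hT, ← Finset.sum_mul, ← Finset.mul_sum]
    have hTw : T * (∑ i ∈ S, w i * u (p i)) = ∑ i ∈ S, |γ i| * u (p i) := by
      rw [Finset.mul_sum]
      refine Finset.sum_congr rfl fun i _ => ?_
      simp only [hw]
      field_simp
    set a := u x with ha
    set b := u d with hb
    set Y := u y with hY
    set Pv := ∑ i ∈ S, |γ i| * u (p i) with hPv
    set L := ∑ i ∈ S, γ i * (u (qpt D d tw i) - u d) with hL
    have key1 : |t*(a - b) - t*T*(Y - b)| ≤ 2*ε := by
      have hA : t*(a-b) - t*T*(Y-b) = (u (t•x + (1-t)•d) - t*b - (1-t)*Y)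
          - (u (t•x + (1-t)•d) - t*a - (1-t)*b) := by rw [h1t]; ring
      rw [hA]
      refine (abs_sub _ _).trans ?_
      have : (2:ℝ)*ε = ε + ε := by ring
      rw [this]
      exact add_le_add e2 e1
    have key2 : |(a - b) - T*(Y - b)| ≤ 2*(1+T)*ε := by
      have htpos : 0 < t := by positivity
      have hfac : t*(a-b) - t*T*(Y-b) = t * ((a - b) - T*(Y - b)) := by ring
      rw [hfac, abs_mul, abs_of_pos htpos] at key1
      have htinv : (1+T) * t = 1 := by rw [htdef]; field_simp
      calc |(a - b) - T*(Y - b)| = (1+T) * (t * |(a - b) - T*(Y - b)|) := by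
            rw [← mul_assoc, htinv, one_mul]
        _ ≤ (1+T) * (2*ε) := mul_le_mul_of_nonneg_left key1 (le_of_lt h1T)
        _ = 2*(1+T)*ε := by ring
    have key3 : |T * Y - Pv| ≤ T * S.card * ε := by
      rw [← hTw, show T*Y - T*(∑ i ∈ S, w i * u (p i))
          = T * (Y - ∑ i ∈ S, w i * u (p i)) from by ring, abs_mul, abs_of_pos hTpos]
      calc T * |Y - ∑ i ∈ S, w i * u (p i)| ≤ T * (S.card * ε) :=
            mul_le_mul_of_nonneg_left e3 hTnn
        _ = T * S.card * ε := by ring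
    have key4 : |(Pv - T*b) - L| ≤ 2*T*ε := by
      have hPb : Pv - T*b = ∑ i ∈ S, |γ i| * (u (p i) - u d) := by
        have h5 : ∑ i ∈ S, |γ i| * (u (p i) - u d)
            = ∑ i ∈ S, (|γ i| * u (p i) - |γ i| * u d) :=
          Finset.sum_congr rfl fun i _ => by ring
        rw [h5, Finset.sum_sub_distrib, ← Finset.sum_mul, ← hT, ← hPv, ← hb]
      rw [hPb]
      exact e4s
    have final : |a - (b + L)| ≤ (2 * (1 + T) + T * S.card + 2 * T) * ε := by
      calc |a - (b + L)| = |(((a - b) - T*(Y-b)) + (T*Y - Pv)) + ((Pv - T*b) - L)| := by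
            rw [show a - (b + L) = (((a - b) - T*(Y-b)) + (T*Y - Pv)) + ((Pv - T*b) - L)
              from by ring]
        _ ≤ (|((a - b) - T*(Y-b)) + (T*Y - Pv)| + |(Pv - T*b) - L|) := abs_add_le _ _
        _ ≤ ((|(a - b) - T*(Y-b)| + |T*Y - Pv|) + |(Pv - T*b) - L|) :=
            add_le_add (abs_add_le _ _) le_rfl
        _ ≤ (2*(1+T)*ε + T*S.card*ε) + 2*T*ε := add_le_add (add_le_add key2 key3) key4
        _ = (2 * (1 + T) + T * S.card + 2 * T) * ε := by ring
    rw [haffx]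
    exact final

end ANCHOR

noncomputable section METRIC

variable (D : Set X)

/-- set of defect values -/
def dset (u : X → ℝ) : Set ℝ :=
  {r | ∃ x ∈ D, ∃ y ∈ D, ∃ t : ℝ, 0 ≤ t ∧ t ≤ 1 ∧
    r = |u (t • x + (1 - t) • y) - t * u x - (1 - t) * u y|}

/-- the defect seminorm -/
def NN (u : X → ℝ) : ℝ := sSup (dset D u)

theorem NN_le {u : X → ℝ} {ε : ℝ} (h : Def1 D u ε) (hε : 0 ≤ ε) : NN D u ≤ ε := by
  refine Real.sSup_le ?_ hε
  rintro r ⟨x, hx, y, hy, t, ht0, ht1, rfl⟩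
  exact h x hx y hy t ht0 ht1

theorem NN_nonneg (u : X → ℝ) : 0 ≤ NN D u := by
  refine Real.sSup_nonneg ?_
  rintro r ⟨x, hx, y, hy, t, ht0, ht1, rfl⟩
  exact abs_nonneg _

theorem def1_NN {u : X → ℝ} (h : ∃ ε : ℝ, 0 ≤ ε ∧ Def1 D u ε) : Def1 D u (NN D u) := by
  obtain ⟨ε, hε, hdef⟩ := h
  intro x hx y hy t ht0 ht1
  refine le_csSup ⟨ε, ?_⟩ ⟨x, hx, y, hy, t, ht0, ht1, rfl⟩
  rintro r ⟨x', hx', y', hy', t', ht0', ht1', rfl⟩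
  exact hdef x' hx' y' hy' t' ht0' ht1'

/-- the space of functions with finite defect -/
structure EE where
  f : X → ℝ
  hf : ∃ ε : ℝ, 0 ≤ ε ∧ Def1 D f ε

theorem EE.sub_fin (g h : EE D) : ∃ ε : ℝ, 0 ≤ ε ∧ Def1 D (fun x => g.f x - h.f x) ε := by
  obtain ⟨ε, hε, hdef⟩ := g.hf
  obtain ⟨ε', hε', hdef'⟩ := h.hf
  exact ⟨ε + ε', by linarith, fun x hx y hy t ht ht1 => by simpa [sub_eq_add_neg] using (hdef.add hdef'.neg) x hx y hy t ht ht1⟩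

instance : PseudoMetricSpace (EE D) where
  dist g h := NN D (fun x => g.f x - h.f x)
  dist_self g := by
    have h1 : ∀ r ∈ dset D (fun x => g.f x - g.f x), r ≤ 0 := by
      rintro r ⟨x, hx, y, hy, t, ht0, ht1, rfl⟩
      simp
    exact le_antisymm (Real.sSup_le h1 le_rfl) (NN_nonneg D _)
  dist_comm g h := by
    show NN D _ = NN D _
    unfold NN
    congr 1
    ext r
    constructor
    · rintro ⟨x, hx, y, hy, t, ht0, ht1, rfl⟩
      refine ⟨x, hx, y, hy, t, ht0, ht1, ?_⟩
      rw [← abs_neg]; ring_nf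
    · rintro ⟨x, hx, y, hy, t, ht0, ht1, rfl⟩
      refine ⟨x, hx, y, hy, t, ht0, ht1, ?_⟩
      rw [← abs_neg]; ring_nf
  dist_triangle g h k := by
    show NN D _ ≤ NN D _ + NN D _
    have h1 := def1_NN D (EE.sub_fin D g h)
    have h2 := def1_NN D (EE.sub_fin D h k)
    refine Real.sSup_le ?_ (add_nonneg (NN_nonneg D _) (NN_nonneg D _))
    rintro r ⟨x, hx, y, hy, t, ht0, ht1, rfl⟩
    have e1 := h1 x hx y hy t ht0 ht1
    have e2 := h2 x hx y hy t ht0 ht1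
    set z := t • x + (1 - t) • y
    calc |g.f z - k.f z - t * (g.f x - k.f x) - (1 - t) * (g.f y - k.f y)|
        = |((g.f z - h.f z) - t * (g.f x - h.f x) - (1 - t) * (g.f y - h.f y)) +
            ((h.f z - k.f z) - t * (h.f x - k.f x) - (1 - t) * (h.f y - k.f y))| := by
          ring_nf
      _ ≤ _ := (abs_add_le _ _).trans (add_le_add e1 e2)

theorem EE.dist_eq (g h : EE D) : dist g h = NN D (fun x => g.f x - h.f x) := rfl

end METRIC

noncomputable section COMPLETE

variable (D : Set X) (d : X) (tw : (Module.Basis.ofVectorSpaceIndex ℝ (Submodule.span ℝ D)) → ℝ)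

theorem mem_combo {x y : X} {t : ℝ} (hD : Convex ℝ D) (hx : x ∈ D) (hy : y ∈ D)
    (ht0 : 0 ≤ t) (ht1 : t ≤ 1) : t • x + (1 - t) • y ∈ D :=
  hD hx hy ht0 (by linarith) (by ring)

theorem complete_EE (hD : Convex ℝ D) (hd : d ∈ D)
    (htw : ∀ i, 0 < tw i ∧ qpt D d tw i ∈ D ∧
      d - tw i • ((Module.Basis.ofVectorSpace ℝ (Submodule.span ℝ D) i : Submodule.span ℝ D) : X) ∈ D) :
    CompleteSpace (EE D) := by
  classical
  apply Metric.complete_of_cauchySeq_tendsto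
  intro g hg
  rw [Metric.cauchySeq_iff] at hg
  set v : ℕ → (X → ℝ) := fun j => fun x => (g j).f x - (g 0).f x with hv
  set cj : ℕ → (X → ℝ) := fun j => fun x => v j x - aff D d tw (v j) x with hcj
  have hvsub : ∀ j k, (fun x => v j x - v k x) = (fun x => (g j).f x - (g k).f x) := by
    intro j k; funext x; simp only [hv]; ring
  have hcdiff : ∀ j k x, cj j x - cj k x =
      (g j).f x - (g k).f x - aff D d tw (fun y => (g j).f y - (g k).f y) x := by
    intro j k x
    simp only [hcj]
    have h1 : aff D d tw (fun y => v j y - v k y) x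
        = aff D d tw (v j) x - aff D d tw (v k) x := aff_sub D d tw _ _ x
    rw [hvsub j k] at h1
    have h2 : (fun y => (g j).f y - (g k).f y) x = (g j).f x - (g k).f x := rfl
    rw [h1]
    simp only [hv]
    ring
  -- pointwise bound on differences
  have hKbd : ∀ x ∈ D, ∃ K : ℝ, 0 ≤ K ∧ ∀ j k : ℕ,
      |cj j x - cj k x| ≤ K * dist (g j) (g k) := by
    intro x hx
    obtain ⟨K, hK0, hK⟩ := aff_pointwise D d tw hD hd htw x hx
    refine ⟨K, hK0, fun j k => ?_⟩
    rw [hcdiff j k x]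
    have hfin : ∃ ε : ℝ, 0 ≤ ε ∧ Def1 D (fun y => (g j).f y - (g k).f y) ε :=
      EE.sub_fin D (g j) (g k)
    exact hK _ _ (def1_NN D hfin) (NN_nonneg D _)
  -- pointwise Cauchy
  have hCau : ∀ x ∈ D, ∃ l : ℝ, Filter.Tendsto (fun j => cj j x) Filter.atTop (nhds l) := by
    intro x hx
    obtain ⟨K, hK0, hK⟩ := hKbd x hx
    apply cauchySeq_tendsto_of_complete
    rw [Metric.cauchySeq_iff]
    intro θ hθ
    obtain ⟨N, hN⟩ := hg (θ / (K + 1)) (by positivity)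
    refine ⟨N, fun m hm n hn => ?_⟩
    have h1 := hK m n
    have h2 := hN m hm n hn
    rw [Real.dist_eq]
    calc |cj m x - cj n x| ≤ K * dist (g m) (g n) := h1
      _ < θ := by
          have h3 : K * dist (g m) (g n) ≤ K * (θ / (K + 1)) :=
            mul_le_mul_of_nonneg_left h2.le hK0
          have h4 : K * (θ / (K + 1)) < θ := by
            rw [show K * (θ / (K + 1)) = K * θ / (K + 1) from by ring,
              div_lt_iff₀ (by positivity)]
            nlinarith
          linarith
  set climit : X → ℝ := fun x => if hx : x ∈ D then Classical.choose (hCau x hx) else 0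
    with hclimit
  have hcl : ∀ x (hx : x ∈ D),
      Filter.Tendsto (fun j => cj j x) Filter.atTop (nhds (climit x)) := by
    intro x hx
    have := Classical.choose_spec (hCau x hx)
    simpa [hclimit, dif_pos hx] using this
  set glim : X → ℝ := fun x => (g 0).f x + climit x with hglim
  -- key defect estimate for the limit
  have key : ∀ θ : ℝ, 0 < θ → ∃ N : ℕ, ∀ j ≥ N,
      Def1 D (fun x => glim x - (g j).f x) θ := by
    intro θ hθ
    obtain ⟨N, hN⟩ := hg θ hθ
    refine ⟨N, fun j hj => ?_⟩
    intro x hx y hy t ht0 ht1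
    have hz : t • x + (1 - t) • y ∈ D := mem_combo D hD hx hy ht0 ht1
    set z := t • x + (1 - t) • y with hzdef
    -- identity: glim - g j = (climit - cj j) - aff (v j)
    have hid : ∀ q : X, glim q - (g j).f q = (climit q - cj j q) - aff D d tw (v j) q := by
      intro q
      simp only [hglim, hcj, hv]
      ring
    -- defect of aff (v j) vanishes
    have haff0 : aff D d tw (v j) z - t * aff D d tw (v j) x -
        (1 - t) * aff D d tw (v j) y = 0 := by
      rw [aff_affine D d tw hd (v j) x hx y hy t ht0 ht1]
      ring
    -- defect of (climit - cj j) is a limit of defects of (cj k - cj j)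
    have htend : Filter.Tendsto
        (fun k => |(cj k z - cj j z) - t * (cj k x - cj j x) - (1 - t) * (cj k y - cj j y)|)
        Filter.atTop
        (nhds |(climit z - cj j z) - t * (climit x - cj j x) - (1 - t) * (climit y - cj j y)|) := by
      apply Filter.Tendsto.abs
      apply Filter.Tendsto.sub
      apply Filter.Tendsto.sub
      · exact (hcl z hz).sub tendsto_const_nhds
      · exact (((hcl x hx).sub tendsto_const_nhds).const_mul t)
      · exact (((hcl y hy).sub tendsto_const_nhds).const_mul (1 - t))
    have hbound : ∀ k ≥ N, |(cj k z - cj j z) - t * (cj k x - cj j x) -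
        (1 - t) * (cj k y - cj j y)| ≤ θ := by
      intro k hk
      have hfin := EE.sub_fin D (g k) (g j)
      have hdef := def1_NN D hfin
      have hdd := hdef x hx y hy t ht0 ht1
      have hNle : NN D (fun y => (g k).f y - (g j).f y) = dist (g k) (g j) := rfl
      have hlt : dist (g k) (g j) < θ := hN k hk j hj
      have heqz : ∀ q : X, cj k q - cj j q = (g k).f q - (g j).f q -
          aff D d tw (fun y => (g k).f y - (g j).f y) q := hcdiff k j
      have haffkj : aff D d tw (fun y => (g k).f y - (g j).f y) z -
          t * aff D d tw (fun y => (g k).f y - (g j).f y) x -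
          (1 - t) * aff D d tw (fun y => (g k).f y - (g j).f y) y = 0 := by
        rw [aff_affine D d tw hd _ x hx y hy t ht0 ht1]
        ring
      calc |(cj k z - cj j z) - t * (cj k x - cj j x) - (1 - t) * (cj k y - cj j y)|
          = |((g k).f z - (g j).f z - t * ((g k).f x - (g j).f x) -
              (1 - t) * ((g k).f y - (g j).f y)) -
              (aff D d tw (fun y => (g k).f y - (g j).f y) z -
               t * aff D d tw (fun y => (g k).f y - (g j).f y) x -
               (1 - t) * aff D d tw (fun y => (g k).f y - (g j).f y) y)| := by
            rw [heqz z, heqz x, heqz y]; congr 1; ring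
        _ = |(g k).f z - (g j).f z - t * ((g k).f x - (g j).f x) -
              (1 - t) * ((g k).f y - (g j).f y)| := by rw [haffkj, sub_zero]
        _ ≤ NN D (fun y => (g k).f y - (g j).f y) := hdd
        _ ≤ θ := by rw [hNle]; exact le_of_lt hlt
    have hlim_le : |(climit z - cj j z) - t * (climit x - cj j x) -
        (1 - t) * (climit y - cj j y)| ≤ θ := by
      refine le_of_tendsto htend ?_
      filter_upwards [Filter.eventually_atTop.2 ⟨N, fun k hk => hk⟩] with k hk
      exact hbound k hk
    calc |(fun x => glim x - (g j).f x) z - t * (fun x => glim x - (g j).f x) x -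
          (1 - t) * (fun x => glim x - (g j).f x) y|
        = |((climit z - cj j z) - t * (climit x - cj j x) - (1 - t) * (climit y - cj j y)) -
            (aff D d tw (v j) z - t * aff D d tw (v j) x - (1 - t) * aff D d tw (v j) y)| := by
          simp only
          rw [hid z, hid x, hid y]; congr 1; ring
      _ = |(climit z - cj j z) - t * (climit x - cj j x) - (1 - t) * (climit y - cj j y)| := by
          rw [haff0, sub_zero]
      _ ≤ θ := hlim_le
  -- glim has finite defect
  obtain ⟨N1, hN1⟩ := key 1 one_pos
  have hglimfin : ∃ ε : ℝ, 0 ≤ ε ∧ Def1 D glim ε := by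
    obtain ⟨ε, hε, hdef⟩ := (g N1).hf
    have h1 := hN1 N1 le_rfl
    have hadd := h1.add hdef
    refine ⟨1 + ε, by linarith, ?_⟩
    have : (fun x => glim x - (g N1).f x) + (g N1).f = glim := by
      funext x; simp only [Pi.add_apply]; ring
    rwa [this] at hadd
  refine ⟨⟨glim, hglimfin⟩, ?_⟩
  rw [Metric.tendsto_atTop]
  intro θ hθ
  obtain ⟨N, hN⟩ := key (θ / 2) (by positivity)
  refine ⟨N, fun j hj => ?_⟩
  have h1 := hN j hj
  have h2 : Def1 D (fun x => (g j).f x - glim x) (θ / 2) := by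
    have := h1.neg
    have heq : (-fun x => glim x - (g j).f x) = (fun x => (g j).f x - glim x) := by
      funext x; simp only [Pi.neg_apply]; ring
    rwa [heq] at this
  have : dist (g j) (⟨glim, hglimfin⟩ : EE D) ≤ θ / 2 := NN_le D h2 (by positivity)
  linarith

end COMPLETE

noncomputable section PHI

variable (D : Set X) (d : X) (tw : (Module.Basis.ofVectorSpaceIndex ℝ (Submodule.span ℝ D)) → ℝ)

/-- affine-on-D predicate -/
def AffOn (a : X → ℝ) : Prop :=
  ∀ x ∈ D, ∀ y ∈ D, ∀ t : ℝ, 0 ≤ t → t ≤ 1 →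
    a (t • x + (1 - t) • y) = t * a x + (1 - t) * a y

/-- the set of elements within `m` of an affine function -/
def Phi (m : ℝ) : Set (EE D) :=
  {g | ∃ a : X → ℝ, AffOn D a ∧ ∀ x ∈ D, |g.f x - a x| ≤ m}

theorem Phi_closed (hD : Convex ℝ D) (hd : d ∈ D)
    (htw : ∀ i, 0 < tw i ∧ qpt D d tw i ∈ D ∧
      d - tw i • ((Module.Basis.ofVectorSpace ℝ (Submodule.span ℝ D) i : Submodule.span ℝ D) : X) ∈ D)
    (m : ℝ) : IsClosed (Phi D m) := by
  classical
  apply isClosed_of_closure_subset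
  intro g hg
  rw [Metric.mem_closure_iff] at hg
  -- choose approximating sequence
  have hseq : ∀ n : ℕ, ∃ h : EE D, h ∈ Phi D m ∧ dist g h < 1 / (n + 1) := by
    intro n
    exact hg (1 / (n + 1)) (by positivity)
  choose h hPhi hdist using hseq
  choose aw haw hawb using fun n => hPhi n
  -- modified affine witnesses
  set b : ℕ → X → ℝ := fun n => fun x =>
    aw n x + aff D d tw (fun y => g.f y - (h n).f y) x with hb
  have hbaff : ∀ n, AffOn D (b n) := by
    intro n x hx y hy t ht0 ht1
    simp only [hb]
    rw [haw n x hx y hy t ht0 ht1,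
      aff_affine D d tw hd (fun y => g.f y - (h n).f y) x hx y hy t ht0 ht1]
    ring
  -- pointwise bound
  have hbd : ∀ x ∈ D, ∃ K : ℝ, 0 ≤ K ∧ ∀ n,
      |g.f x - b n x| ≤ m + K * dist g (h n) := by
    intro x hx
    obtain ⟨K, hK0, hK⟩ := aff_pointwise D d tw hD hd htw x hx
    refine ⟨K, hK0, fun n => ?_⟩
    have hfin : ∃ ε : ℝ, 0 ≤ ε ∧ Def1 D (fun y => g.f y - (h n).f y) ε :=
      EE.sub_fin D g (h n)
    have h1 := hK _ _ (def1_NN D hfin) (NN_nonneg D _)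
    have h2 := hawb n x hx
    have hdeq : dist g (h n) = NN D (fun y => g.f y - (h n).f y) := rfl
    rw [hdeq]
    calc |g.f x - b n x|
        = |((fun y => g.f y - (h n).f y) x -
              aff D d tw (fun y => g.f y - (h n).f y) x) + ((h n).f x - aw n x)| := by
          simp only [hb]; congr 1; ring
      _ ≤ |(fun y => g.f y - (h n).f y) x - aff D d tw (fun y => g.f y - (h n).f y) x|
            + |(h n).f x - aw n x| := abs_add_le _ _
      _ ≤ K * NN D (fun y => g.f y - (h n).f y) + m := add_le_add h1 h2
      _ = m + K * NN D (fun y => g.f y - (h n).f y) := by ring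
  -- dist g (h n) tends to 0
  have hdist0 : Filter.Tendsto (fun n => dist g (h n)) Filter.atTop (nhds 0) := by
    have hup : Filter.Tendsto (fun n : ℕ => 1 / ((n : ℝ) + 1)) Filter.atTop (nhds 0) :=
      tendsto_one_div_add_atTop_nhds_zero_nat
    refine squeeze_zero (fun n => dist_nonneg) (fun n => (hdist n).le) hup
  -- ultrafilter limit of the b n
  set U : Ultrafilter ℕ := Ultrafilter.of Filter.atTop with hU
  have hUle : (U : Filter ℕ) ≤ Filter.atTop := Ultrafilter.of_le _
  have hlimex : ∀ x ∈ D, ∃ l : ℝ, Filter.Tendsto (fun n => b n x) (U : Filter ℕ) (nhds l) := by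
    intro x hx
    obtain ⟨K, hK0, hK⟩ := hbd x hx
    -- eventual bound
    have hev : ∀ᶠ n in (U : Filter ℕ), b n x ∈ Set.Icc (-(|g.f x| + m + K)) (|g.f x| + m + K) := by
      have hev1 : ∀ᶠ n in Filter.atTop, dist g (h n) ≤ 1 := by
        have := hdist0.eventually (eventually_le_nhds one_pos)  -- dist ≤ something
        filter_upwards [this] with n hn
        exact hn
      refine Filter.Eventually.filter_mono hUle ?_
      filter_upwards [hev1] with n hn
      have h1 := hK n
      have h2 : |g.f x - b n x| ≤ m + K := by
        calc |g.f x - b n x| ≤ m + K * dist g (h n) := h1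
          _ ≤ m + K := by nlinarith [dist_nonneg (x := g) (y := h n)]
      rw [abs_le] at h2
      constructor
      · have := abs_le.1 (le_refl |g.f x|)
        have h3 : -(|g.f x|) ≤ g.f x := neg_abs_le _
        linarith [h2.1, h2.2, neg_abs_le (g.f x), le_abs_self (g.f x)]
      · linarith [h2.1, h2.2, neg_abs_le (g.f x), le_abs_self (g.f x)]
    obtain ⟨l, _, hl⟩ := (isCompact_Icc (a := -(|g.f x| + m + K)) (b := |g.f x| + m + K)).ultrafilter_le_nhds
      (U.map (fun n => b n x)) (by rwa [Ultrafilter.coe_map, Filter.le_principal_iff])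
    exact ⟨l, hl⟩
  set a : X → ℝ := fun x => if hx : x ∈ D then Classical.choose (hlimex x hx) else 0 with ha
  have hal : ∀ x (hx : x ∈ D),
      Filter.Tendsto (fun n => b n x) (U : Filter ℕ) (nhds (a x)) := by
    intro x hx
    have := Classical.choose_spec (hlimex x hx)
    simpa [ha, dif_pos hx] using this
  refine ⟨a, ?_, ?_⟩
  · -- a is affine on D
    intro x hx y hy t ht0 ht1
    have hz : t • x + (1 - t) • y ∈ D := mem_combo D hD hx hy ht0 ht1
    have h1 : Filter.Tendsto (fun n => b n (t • x + (1 - t) • y)) (U : Filter ℕ)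
        (nhds (a (t • x + (1 - t) • y))) := hal _ hz
    have h2 : Filter.Tendsto (fun n => b n (t • x + (1 - t) • y)) (U : Filter ℕ)
        (nhds (t * a x + (1 - t) * a y)) := by
      have heq : (fun n => b n (t • x + (1 - t) • y)) =
          (fun n => t * b n x + (1 - t) * b n y) := by
        funext n
        exact hbaff n x hx y hy t ht0 ht1
      rw [heq]
      exact (((hal x hx).const_mul t).add ((hal y hy).const_mul (1 - t)))
    exact tendsto_nhds_unique h1 h2
  · -- the bound
    intro x hx
    obtain ⟨K, hK0, hK⟩ := hbd x hx
    refine le_of_forall_pos_le_add ?_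
    intro θ hθ
    have htendabs : Filter.Tendsto (fun n => |g.f x - b n x|) (U : Filter ℕ)
        (nhds |g.f x - a x|) := (tendsto_const_nhds.sub (hal x hx)).abs
    refine le_of_tendsto htendabs ?_
    have hev1 : ∀ᶠ n in Filter.atTop, dist g (h n) ≤ θ / (K + 1) := by
      have := hdist0.eventually (eventually_le_nhds (by positivity : (0:ℝ) < θ / (K + 1)))
      filter_upwards [this] with n hn
      exact hn
    refine Filter.Eventually.filter_mono hUle ?_
    filter_upwards [hev1] with n hn
    calc |g.f x - b n x| ≤ m + K * dist g (h n) := hK n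
      _ ≤ m + K * (θ / (K + 1)) := by nlinarith [dist_nonneg (x := g) (y := h n)]
      _ ≤ m + θ := by
          have : K * (θ / (K + 1)) ≤ θ := by
            rw [show K * (θ / (K + 1)) = K * θ / (K + 1) from by ring,
              div_le_iff₀ (by positivity)]
            nlinarith
          linarith

end PHI

end AUX

/-- Uniform boundedness for affinity on thick convex sets: if every approximately affine
function on `D` is at finite uniform distance from an affine function, then there is a
constant `A` such that every `ε`-affine function on `D` is within uniform distance `A·ε`
of an affine function. -/
theorem stmt_15 {X : Type*} [AddCommGroup X] [Module ℝ X] (D : Set X) (hD : Convex ℝ D)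
    (hthick : ∃ d ∈ D, ∀ v ∈ Submodule.span ℝ D, ∃ δ : ℝ, 0 < δ ∧
      ∀ t : ℝ, 0 < t → t ≤ δ → d + t • v ∈ D ∧ d - t • v ∈ D)
    (happrox : ∀ f : X → ℝ,
      (∃ ε : ℝ, 0 ≤ ε ∧ ∀ x ∈ D, ∀ y ∈ D, ∀ t : ℝ, 0 ≤ t → t ≤ 1 →
        |f (t • x + (1 - t) • y) - t * f x - (1 - t) * f y| ≤ ε) →
      ∃ a : X → ℝ,
        (∀ x ∈ D, ∀ y ∈ D, ∀ t : ℝ, 0 ≤ t → t ≤ 1 →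
          a (t • x + (1 - t) • y) = t * a x + (1 - t) * a y) ∧
        ∃ C : ℝ, ∀ x ∈ D, |f x - a x| ≤ C) :
    ∃ A : ℝ, 0 ≤ A ∧ ∀ ε : ℝ, 0 ≤ ε → ∀ f : X → ℝ,
      (∀ x ∈ D, ∀ y ∈ D, ∀ t : ℝ, 0 ≤ t → t ≤ 1 →
        |f (t • x + (1 - t) • y) - t * f x - (1 - t) * f y| ≤ ε) →
      ∃ a : X → ℝ,
        (∀ x ∈ D, ∀ y ∈ D, ∀ t : ℝ, 0 ≤ t → t ≤ 1 →
          a (t • x + (1 - t) • y) = t * a x + (1 - t) * a y) ∧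
        ∀ x ∈ D, |f x - a x| ≤ A * ε := by
  classical
  obtain ⟨d, hd, hth⟩ := hthick
  -- choose the thickness scales for the basis directions
  have hch : ∀ i : (Module.Basis.ofVectorSpaceIndex ℝ (Submodule.span ℝ D)), ∃ δ : ℝ, 0 < δ ∧
      d + δ • ((Module.Basis.ofVectorSpace ℝ (Submodule.span ℝ D) i : Submodule.span ℝ D) : X) ∈ D ∧
      d - δ • ((Module.Basis.ofVectorSpace ℝ (Submodule.span ℝ D) i : Submodule.span ℝ D) : X) ∈ D := by
    intro i
    obtain ⟨δ, hδ, hpt⟩ := hth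
      ((Module.Basis.ofVectorSpace ℝ (Submodule.span ℝ D) i : Submodule.span ℝ D) : X)
      (SetLike.coe_mem _)
    exact ⟨δ, hδ, (hpt δ hδ le_rfl).1, (hpt δ hδ le_rfl).2⟩
  choose tw htw1 htw2 htw3 using hch
  have htw : ∀ i, 0 < tw i ∧ qpt D d tw i ∈ D ∧
      d - tw i • ((Module.Basis.ofVectorSpace ℝ (Submodule.span ℝ D) i : Submodule.span ℝ D) : X) ∈ D :=
    fun i => ⟨htw1 i, by rw [qpt]; exact htw2 i, htw3 i⟩
  letI : CompleteSpace (EE D) := complete_EE D d tw hD hd htw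
  haveI : Nonempty (EE D) := ⟨⟨fun _ => 0, 0, le_rfl, by
    intro x hx y hy t ht0 ht1; simp⟩⟩
  -- covering by the closed sets Phi
  have hcover : (⋃ m : ℕ, Phi D (m : ℝ)) = Set.univ := by
    ext g
    simp only [Set.mem_iUnion, Set.mem_univ, iff_true]
    obtain ⟨a, haff, C, hC⟩ := happrox g.f g.hf
    obtain ⟨m, hm⟩ := exists_nat_ge C
    exact ⟨m, a, haff, fun x hx => (hC x hx).trans hm⟩
  have hclosed : ∀ m : ℕ, IsClosed (Phi D (m : ℝ)) :=
    fun m => Phi_closed D d tw hD hd htw (m : ℝ)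
  obtain ⟨m, hm⟩ := nonempty_interior_of_iUnion_of_closed hclosed hcover
  obtain ⟨g₀, hg₀int⟩ := hm
  obtain ⟨r, hr, hball⟩ := Metric.mem_nhds_iff.1 (mem_interior_iff_mem_nhds.1 hg₀int)
  have hg₀Phi : g₀ ∈ Phi D (m : ℝ) :=
    interior_subset hg₀int
  obtain ⟨a₀, ha₀aff, ha₀⟩ := hg₀Phi
  -- the uniform constant
  refine ⟨4 * m / r, by positivity, ?_⟩
  intro ε hε f hf
  rcases eq_or_lt_of_le hε with hε0 | hεpos
  · -- ε = 0 : f itself is affine on D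
    refine ⟨f, ?_, ?_⟩
    · intro x hx y hy t ht0 ht1
      have h1 := hf x hx y hy t ht0 ht1
      rw [← hε0] at h1
      have h2 := abs_nonneg (f (t • x + (1 - t) • y) - t * f x - (1 - t) * f y)
      have h3 : |f (t • x + (1 - t) • y) - t * f x - (1 - t) * f y| = 0 := le_antisymm h1 h2
      rw [abs_eq_zero] at h3
      linarith [h3]
    · intro x hx
      rw [sub_self, abs_zero, ← hε0, mul_zero]
  · -- ε > 0 : rescale into the ball around g₀
    set c : ℝ := r / (2 * ε) with hc
    have hcpos : 0 < c := by positivity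
    set u : X → ℝ := fun x => c * f x with hu
    have hudef : Def1 D u (r / 2) := by
      have := Def1.smul (D := D) c hf
      have hcr : |c| * ε = r / 2 := by
        rw [abs_of_pos hcpos, hc]
        field_simp
      rwa [hcr] at this
    have hufin : ∃ ε' : ℝ, 0 ≤ ε' ∧ Def1 D u ε' := ⟨r / 2, by positivity, hudef⟩
    obtain ⟨ε₀, hε₀, hg₀def⟩ := g₀.hf
    have hhfin : ∃ ε' : ℝ, 0 ≤ ε' ∧ Def1 D (fun x => g₀.f x + u x) ε' := by
      refine ⟨ε₀ + r / 2, by positivity, ?_⟩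
      have := hg₀def.add hudef
      exact this
    set hE : EE D := ⟨fun x => g₀.f x + u x, hhfin⟩ with hhE
    have hdist : dist hE g₀ < r := by
      have heq : (fun x => hE.f x - g₀.f x) = u := by
        funext x; simp [hhE]
      have : dist hE g₀ = NN D u := by
        rw [EE.dist_eq, heq]
      rw [this]
      have := NN_le D hudef (by positivity)
      linarith
    have hhPhi : hE ∈ Phi D (m : ℝ) := hball (by rwa [Metric.mem_ball])
    obtain ⟨b, hbaff, hb⟩ := hhPhi
    -- final affine function
    refine ⟨fun x => c⁻¹ * (b x - a₀ x), ?_, ?_⟩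
    · intro x hx y hy t ht0 ht1
      dsimp only
      rw [hbaff x hx y hy t ht0 ht1, ha₀aff x hx y hy t ht0 ht1]
      ring
    · intro x hx
      have h1 := hb x hx
      have h2 := ha₀ x hx
      -- |u x - (b x - a₀ x)| ≤ 2m
      have h3 : |u x - (b x - a₀ x)| ≤ 2 * m := by
        calc |u x - (b x - a₀ x)|
            = |(hE.f x - b x) - (g₀.f x - a₀ x)| := by
              simp only [hhE]; congr 1; ring
          _ ≤ |hE.f x - b x| + |g₀.f x - a₀ x| := abs_sub _ _
          _ ≤ m + m := add_le_add h1 h2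
          _ = 2 * m := by ring
      have hcne : c ≠ 0 := ne_of_gt hcpos
      have h4 : u x - (b x - a₀ x) = c * (f x - c⁻¹ * (b x - a₀ x)) := by
        simp only [hu]
        field_simp
      rw [h4, abs_mul, abs_of_pos hcpos] at h3
      have h5 : |f x - c⁻¹ * (b x - a₀ x)| ≤ 2 * m / c := by
        rw [le_div_iff₀ hcpos, mul_comm]
        exact h3
      have h6 : 2 * (m : ℝ) / c = 4 * m / r * ε := by
        rw [hc]
        field_simp
        ring
      linarith [h5, h6.le]
end

section
/- Let c₀ be the real Banach space of sequences converging to 0 with the supremum norm, let B denote its closed unit ball, and let A ⊆ c₀ be a set whose closed convex hull equals B. Then for every y ∈ B and every ε > 0 there exists x ∈ A with ‖y − x/2‖ ≤ 1/2 + ε. -/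
open ZeroAtInfty Filter Finset

/-- If `A` is a subset of `c₀` whose closed convex hull is the closed unit ball `B`,
then every point of `B` is within `1/2 + ε` of half of some point of `A`. -/
theorem stmt_16 (A : Set C₀(ℕ, ℝ))
    (hA : closure (convexHull ℝ A) = Metric.closedBall (0 : C₀(ℕ, ℝ)) 1) :
    ∀ y : C₀(ℕ, ℝ), ‖y‖ ≤ 1 → ∀ ε : ℝ, 0 < ε →
      ∃ x ∈ A, ‖y - (2 : ℝ)⁻¹ • x‖ ≤ 1 / 2 + ε := by
  have key : ∀ (f : C₀(ℕ, ℝ)) (k : ℕ), |f k| ≤ ‖f‖ := by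
    intro f k
    have h1 : ‖f.toBCF k‖ ≤ ‖f.toBCF‖ := BoundedContinuousFunction.norm_coe_le_norm _ k
    rwa [ZeroAtInftyContinuousMap.norm_toBCF_eq_norm, show f.toBCF k = f k from rfl,
      Real.norm_eq_abs] at h1
  intro y hy ε hε
  have hAB : ∀ x ∈ A, ‖x‖ ≤ 1 := by
    intro x hx
    have : x ∈ Metric.closedBall (0 : C₀(ℕ, ℝ)) 1 := by
      rw [← hA]; exact subset_closure (subset_convexHull ℝ A hx)
    simpa [dist_zero_right] using this
  have hyk : ∀ k, |y k| ≤ 1 := fun k => (key y k).trans hy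
  have hz : Tendsto (⇑y) atTop (nhds 0) := by
    have := y.zero_at_infty'
    rwa [cocompact_eq_atTop (α := ℕ)] at this
  obtain ⟨N, hN⟩ := Metric.tendsto_atTop.mp hz ε hε
  have hN' : ∀ k, N ≤ k → |y k| ≤ ε := by
    intro k hk
    have := hN k hk
    rw [Real.dist_eq, sub_zero] at this
    exact this.le
  set σ : ℕ → ℝ := fun k => if 0 ≤ y k then 1 else -1 with hσ
  have hσ1 : ∀ k, |σ k| = 1 := by
    intro k; simp only [hσ]; split <;> simp
  have hσsq : ∀ k, σ k * σ k = 1 := by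
    intro k; simp only [hσ]; split <;> norm_num
  -- the point p
  set pf : ℕ → ℝ := fun k => if k < N then σ k else y k with hpf
  have hpz : Tendsto pf (Filter.cocompact ℕ) (nhds 0) := by
    rw [cocompact_eq_atTop (α := ℕ)]
    apply hz.congr'
    filter_upwards [eventually_ge_atTop N] with k hk
    simp [hpf, Nat.not_lt.mpr hk]
  set p : C₀(ℕ, ℝ) := ⟨⟨pf, continuous_of_discreteTopology⟩, hpz⟩ with hp
  have hpapp : ∀ k, p k = pf k := fun k => rfl
  have hpnorm : p ∈ Metric.closedBall (0 : C₀(ℕ, ℝ)) 1 := by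
    rw [Metric.mem_closedBall, dist_zero_right, ← ZeroAtInftyContinuousMap.norm_toBCF_eq_norm]
    rw [BoundedContinuousFunction.norm_le zero_le_one]
    intro k
    rw [show p.toBCF k = p k from rfl, hpapp, Real.norm_eq_abs, hpf]
    by_cases h : k < N
    · simp only [h, if_true]; exact le_of_eq (hσ1 k)
    · simp only [h, if_false]; exact hyk k
  have hpcl : p ∈ closure (convexHull ℝ A) := by rw [hA]; exact hpnorm
  set δ : ℝ := ε / (N + 1) with hδ
  have hδpos : 0 < δ := by positivity
  obtain ⟨z, hzA, hdz⟩ := Metric.mem_closure_iff.mp hpcl δ hδpos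
  -- convex combination
  rw [_root_.convexHull_eq] at hzA
  obtain ⟨ι, t, w, xs, hw0, hw1, hxsA, hcm⟩ := hzA
  have hzsum : z = ∑ i ∈ t, w i • xs i := by
    rw [← hcm, Finset.centerMass_eq_of_sum_1 _ _ hw1]
  -- the functional
  set φ : C₀(ℕ, ℝ) → ℝ := fun f => ∑ k ∈ Finset.range N, σ k * f k with hφ
  have hφp : φ p = N := by
    show ∑ k ∈ Finset.range N, σ k * p k = N
    have h1 : ∀ k ∈ Finset.range N, σ k * p k = 1 := by
      intro k hk
      simp only [Finset.mem_range] at hk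
      rw [hpapp, hpf]
      simp only [hk, if_true]
      exact hσsq k
    rw [Finset.sum_congr rfl h1, Finset.sum_const, nsmul_eq_mul, mul_one, Finset.card_range]
  -- |φ p - φ z| ≤ N * δ
  have hφdiff : |φ p - φ z| ≤ N * dist p z := by
    show |∑ k ∈ Finset.range N, σ k * p k - ∑ k ∈ Finset.range N, σ k * z k| ≤ _
    rw [← Finset.sum_sub_distrib]
    refine (Finset.abs_sum_le_sum_abs _ _).trans ?_
    have : ∀ k ∈ Finset.range N, |σ k * p k - σ k * z k| ≤ dist p z := by
      intro k _
      rw [← mul_sub, abs_mul, hσ1, one_mul]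
      have : p k - z k = (p - z) k := by
        simp [ZeroAtInftyContinuousMap.coe_sub]
      rw [this, dist_eq_norm]
      exact key _ k
    refine (Finset.sum_le_sum this).trans ?_
    rw [Finset.sum_const, Finset.card_range, nsmul_eq_mul]
  have hφzlb : (N : ℝ) - ε < φ z := by
    have h1 : (N : ℝ) * dist p z < ε := by
      calc (N : ℝ) * dist p z ≤ (N : ℝ) * δ :=
            mul_le_mul_of_nonneg_left hdz.le (Nat.cast_nonneg N)
        _ < ε := by
            rw [hδ]
            have h : (N : ℝ) / (N + 1) < 1 := by
              rw [div_lt_one (by positivity)]; linarith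
            calc (N:ℝ) * (ε / (N+1)) = (N / (N+1)) * ε := by ring
              _ < 1 * ε := mul_lt_mul_of_pos_right h hε
              _ = ε := one_mul ε
    have h2 := (abs_lt.mp (lt_of_le_of_lt hφdiff h1)).2
    linarith [hφp, h2]
  -- φ z = ∑ w i * φ (xs i)
  have hcoe : ∀ k, z k = ∑ i ∈ t, w i * xs i k := by
    intro k
    rw [hzsum]
    have : ⇑(∑ i ∈ t, w i • xs i) = ∑ i ∈ t, ⇑(w i • xs i) :=
      map_sum (AddMonoidHom.mk' (fun f : C₀(ℕ, ℝ) => ⇑f)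
        (fun f g => ZeroAtInftyContinuousMap.coe_add f g)) _ _
    rw [this, Finset.sum_apply]
    exact Finset.sum_congr rfl fun i _ => by
      rw [ZeroAtInftyContinuousMap.coe_smul]; simp
  have hφz : φ z = ∑ i ∈ t, w i * φ (xs i) := by
    show ∑ k ∈ Finset.range N, σ k * z k = ∑ i ∈ t, w i * ∑ k ∈ Finset.range N, σ k * xs i k
    simp only [hcoe, Finset.mul_sum]
    rw [Finset.sum_comm]
    exact Finset.sum_congr rfl fun i _ => Finset.sum_congr rfl fun k _ => by ring
  -- extract a good x
  have hsumlt : ∑ i ∈ t, w i * ((N : ℝ) - ε) < ∑ i ∈ t, w i * φ (xs i) := by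
    rw [← Finset.sum_mul, hw1, one_mul, ← hφz]; exact hφzlb
  obtain ⟨i, hit, hi⟩ := Finset.exists_lt_of_sum_lt hsumlt
  have hwi : 0 < w i := by
    rcases lt_or_eq_of_le (hw0 i hit) with h | h
    · exact h
    · rw [← h] at hi; simp at hi
  have hφxi : (N : ℝ) - ε < φ (xs i) := lt_of_mul_lt_mul_left (by linarith [hi]) hwi.le
  refine ⟨xs i, hxsA i hit, ?_⟩
  set x := xs i with hx
  have hxnorm : ∀ k, |x k| ≤ 1 := fun k => (key x k).trans (hAB x (hxsA i hit))
  have hterm : ∀ k, σ k * x k ≤ 1 := by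
    intro k
    calc σ k * x k ≤ |σ k * x k| := le_abs_self _
      _ = |x k| := by rw [abs_mul, hσ1, one_mul]
      _ ≤ 1 := hxnorm k
  have hhard : ∀ k, k < N → 1 - ε ≤ σ k * x k := by
    intro k hk
    have hkmem : k ∈ Finset.range N := Finset.mem_range.mpr hk
    have hφx : φ x = ∑ j ∈ Finset.range N, σ j * x j := rfl
    have hsplit : σ k * x k + ∑ j ∈ (Finset.range N).erase k, σ j * x j
        = ∑ j ∈ Finset.range N, σ j * x j :=
      Finset.add_sum_erase _ (fun j => σ j * x j) hkmem
    have hrest : ∑ j ∈ (Finset.range N).erase k, σ j * x j ≤ (N : ℝ) - 1 := by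
      refine (Finset.sum_le_card_nsmul _ _ 1 (fun j _ => hterm j)).trans ?_
      rw [Finset.card_erase_of_mem hkmem, Finset.card_range, nsmul_eq_mul, mul_one]
      have h1N : 1 ≤ N := Nat.one_le_iff_ne_zero.mpr (by omega)
      rw [Nat.cast_sub h1N, Nat.cast_one]
    have := hφxi
    rw [hφx] at this
    linarith
  -- final norm bound
  rw [← ZeroAtInftyContinuousMap.norm_toBCF_eq_norm,
    BoundedContinuousFunction.norm_le (by linarith : (0:ℝ) ≤ 1/2 + ε)]
  intro k
  rw [show (y - (2:ℝ)⁻¹ • x).toBCF k = (y - (2:ℝ)⁻¹ • x) k from rfl, Real.norm_eq_abs]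
  have happ : (y - (2:ℝ)⁻¹ • x) k = y k - 2⁻¹ * x k := by
    simp [ZeroAtInftyContinuousMap.coe_sub, ZeroAtInftyContinuousMap.coe_smul]
  rw [happ]
  by_cases hk : k < N
  · have hb := hhard k hk
    have hxk := hxnorm k
    have hyk1 := hyk k
    rw [hσ] at hb
    rw [abs_le]
    by_cases hs : 0 ≤ y k
    · simp only [hs, if_true, one_mul] at hb
      rw [abs_le] at hxk hyk1
      constructor <;> linarith
    · simp only [hs, if_false, neg_mul, neg_one_mul] at hb
      push_neg at hs
      rw [abs_le] at hxk hyk1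
      constructor <;> linarith
  · have h1 : |y k| ≤ ε := hN' k (Nat.not_lt.mp hk)
    have h2 := hxnorm k
    calc |y k - 2⁻¹ * x k| ≤ |y k| + |2⁻¹ * x k| := abs_sub (y k) (2⁻¹ * x k)
      _ ≤ ε + 2⁻¹ * 1 := by
          refine add_le_add h1 ?_
          rw [abs_mul, abs_of_pos (by norm_num : (0:ℝ) < 2⁻¹)]
          linarith [h2]
      _ ≤ 1/2 + ε := by linarith
end

section
/- Let n and k be positive integers, let S = {1, 2, …, n+k}, let Ω be the collection of all subsets of S of cardinality n, and let 0 < p < 1. If c : S → ℝ satisfies c_i ≥ 0 for all i ∈ S and Σ_{i ∈ ω} c_i ≥ 1 for every ω ∈ Ω, then Σ_{i ∈ S} c_i^p ≥ k·(n+k)^{−p}. -/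
/-- If `c : S → ℝ` is nonnegative on `S = {1,…,n+k}` and `∑_{i ∈ ω} c_i ≥ 1` for every
`n`-subset `ω` of `S`, then for `0 < p < 1` one has `∑_{i ∈ S} c_i^p ≥ k·(n+k)^{-p}`. -/
theorem stmt_18 (n k : ℕ) (hn : 0 < n) (hk : 0 < k) (p : ℝ) (hp0 : 0 < p) (hp1 : p < 1)
    (c : ℕ → ℝ) (hc : ∀ i ∈ Finset.Icc 1 (n + k), 0 ≤ c i)
    (hsum : ∀ ω ∈ Finset.powersetCard n (Finset.Icc 1 (n + k)), 1 ≤ ∑ i ∈ ω, c i) :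
    (k : ℝ) * ((n : ℝ) + (k : ℝ)) ^ (-p) ≤ ∑ i ∈ Finset.Icc 1 (n + k), c i ^ p := by
  classical
  set S := Finset.Icc 1 (n + k) with hS
  have hScard : S.card = n + k := by simp [hS]
  have hnpos : (0:ℝ) < n := by exact_mod_cast hn
  set A := S.filter (fun i => 1 / (n:ℝ) ≤ c i) with hA
  -- A has at least k elements
  have hAcard : k ≤ A.card := by
    by_contra h
    push_neg at h
    have hcompl : n ≤ (S \ A).card := by
      have := Finset.card_sdiff_of_subset (Finset.filter_subset (fun i => 1 / (n:ℝ) ≤ c i) S)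
      rw [← hA] at this
      omega
    obtain ⟨ω, hωsub, hωcard⟩ := Finset.exists_subset_card_eq hcompl
    have hω : ω ∈ Finset.powersetCard n S := by
      rw [Finset.mem_powersetCard]
      exact ⟨hωsub.trans (Finset.sdiff_subset), hωcard⟩
    have h1 := hsum ω hω
    have hlt : ∑ i ∈ ω, c i < ∑ i ∈ ω, 1 / (n:ℝ) := by
      apply Finset.sum_lt_sum_of_nonempty
      · rw [← Finset.card_pos, hωcard]; exact hn
      · intro i hi
        have hi' := hωsub hi
        rw [Finset.mem_sdiff] at hi'
        have : ¬ (1 / (n:ℝ) ≤ c i) := by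
          intro hle
          exact hi'.2 (Finset.mem_filter.mpr ⟨hi'.1, hle⟩)
        linarith
    rw [Finset.sum_const, hωcard, nsmul_eq_mul, mul_one_div, div_self (ne_of_gt hnpos)] at hlt
    linarith
  -- each term on A is at least (n+k)^(-p)
  have hterm : ∀ i ∈ A, ((n:ℝ) + (k:ℝ)) ^ (-p) ≤ c i ^ p := by
    intro i hi
    rw [Finset.mem_filter] at hi
    have h1 : ((n:ℝ) + (k:ℝ)) ^ (-p) ≤ (n:ℝ) ^ (-p) := by
      rw [Real.rpow_neg (by positivity), Real.rpow_neg (le_of_lt hnpos)]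
      apply inv_anti₀
      · positivity
      · apply Real.rpow_le_rpow (le_of_lt hnpos) (le_add_of_nonneg_right (by positivity)) hp0.le
    have h2 : (n:ℝ) ^ (-p) = (1 / (n:ℝ)) ^ p := by
      rw [one_div, Real.rpow_neg (le_of_lt hnpos), ← Real.inv_rpow (le_of_lt hnpos)]
    have h3 : (1 / (n:ℝ)) ^ p ≤ c i ^ p :=
      Real.rpow_le_rpow (by positivity) hi.2 hp0.le
    linarith
  calc (k : ℝ) * ((n : ℝ) + (k : ℝ)) ^ (-p)
      ≤ (A.card : ℝ) * ((n : ℝ) + (k : ℝ)) ^ (-p) := by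
        apply mul_le_mul_of_nonneg_right (by exact_mod_cast hAcard) (by positivity)
    _ = ∑ _i ∈ A, ((n : ℝ) + (k : ℝ)) ^ (-p) := by rw [Finset.sum_const, nsmul_eq_mul]
    _ ≤ ∑ i ∈ A, c i ^ p := Finset.sum_le_sum hterm
    _ ≤ ∑ i ∈ Finset.Icc 1 (n + k), c i ^ p := by
        apply Finset.sum_le_sum_of_subset_of_nonneg (Finset.filter_subset _ _)
        intro i hi _
        exact Real.rpow_nonneg (hc i hi) p
end

section
/- Let X be a real Banach space with closed unit ball B_X satisfying the following convex approximation property: for every ε > 0 there exists m ∈ ℕ such that for every set A ⊆ B_X, every convex combination of elements of A lies in co^[m](A) + ε·B_X, where co^[m](A) denotes the set of convex combinations of at most m elements of A. Then for every p with 0 < p < 1 there exist θ < 1 and κ > 0 such that whenever A ⊆ B_X is symmetric (A = −A) and p-convex, and the closed convex hull of A equals B_X, then B_X ⊆ θ·B_X + κ·A. -/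
open Pointwise

/-- If the unit ball of a real Banach space `X` has the convex approximation property,
then for every `0 < p < 1` there are `θ < 1` and `κ > 0` such that every symmetric
`p`-convex subset `A` of the ball whose closed convex hull is the ball satisfies
`B_X ⊆ θ·B_X + κ·A`. -/
theorem stmt_19 {X : Type*} [NormedAddCommGroup X] [NormedSpace ℝ X] [CompleteSpace X]
    (hcap : ∀ ε : ℝ, 0 < ε → ∃ m : ℕ, ∀ A : Set X, A ⊆ Metric.closedBall 0 1 →
      convexHull ℝ A ⊆
        {x : X | ∃ (t : Fin m → ℝ) (a : Fin m → X), (∀ i, 0 ≤ t i) ∧ (∑ i, t i) = 1 ∧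
          (∀ i, a i ∈ A) ∧ x = ∑ i, t i • a i} + ε • Metric.closedBall (0 : X) 1) :
    ∀ p : ℝ, 0 < p → p < 1 →
      ∃ θ : ℝ, θ < 1 ∧ ∃ κ : ℝ, 0 < κ ∧
        ∀ A : Set X, A ⊆ Metric.closedBall 0 1 → A = -A →
          (∀ (N : ℕ) (t : Fin N → ℝ) (a : Fin N → X), (∀ i, a i ∈ A) →
            (∑ i, |t i| ^ p) ≤ 1 → (∑ i, t i • a i) ∈ A) →
          closure (convexHull ℝ A) = Metric.closedBall 0 1 →
          Metric.closedBall (0 : X) 1 ⊆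
            θ • Metric.closedBall (0 : X) 1 + κ • A := by
  intro p hp hp1
  obtain ⟨m, hm⟩ := hcap (1/4) (by norm_num)
  set κ : ℝ := ((m : ℝ) + 1) ^ (1/p : ℝ) with hκdef
  have hκpos : 0 < κ := Real.rpow_pos_of_pos (by positivity) _
  have hκp : κ ^ p = (m : ℝ) + 1 := by
    rw [hκdef, ← Real.rpow_mul (by positivity), one_div, inv_mul_cancel₀ hp.ne',
      Real.rpow_one]
  refine ⟨1/2, by norm_num, κ, hκpos, ?_⟩
  intro A hAball hsymm hpconv hclos
  intro x hx
  rw [← hclos] at hx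
  obtain ⟨y, hy, hxy⟩ := Metric.mem_closure_iff.1 hx (1/4) (by norm_num)
  obtain ⟨z, hz, w, hw, hzw⟩ := hm A hAball hy
  obtain ⟨t, a, ht, htsum, haA, hzeq⟩ := hz
  -- z ∈ κ • A
  have hzA : z ∈ κ • A := by
    have hsum : (∑ i, |t i / κ| ^ p) ≤ 1 := by
      have h1 : ∀ i : Fin m, |t i / κ| ^ p = t i ^ p / κ ^ p := by
        intro i
        rw [abs_of_nonneg (div_nonneg (ht i) hκpos.le), Real.div_rpow (ht i) hκpos.le]
      have h2 : (∑ i, t i ^ p) ≤ (m : ℝ) := by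
        calc (∑ i, t i ^ p) ≤ ∑ _i : Fin m, (1 : ℝ) := by
              refine Finset.sum_le_sum fun i _ => Real.rpow_le_one (ht i) ?_ hp.le
              calc t i ≤ ∑ j, t j :=
                    Finset.single_le_sum (fun j _ => ht j) (Finset.mem_univ i)
                _ = 1 := htsum
          _ = (m : ℝ) := by simp
      calc (∑ i, |t i / κ| ^ p) = (∑ i, t i ^ p) / κ ^ p := by
            simp_rw [h1]; rw [Finset.sum_div]
        _ ≤ (m : ℝ) / ((m : ℝ) + 1) := by
            rw [hκp]; exact div_le_div_of_nonneg_right h2 (by positivity) |>.trans_eq rfl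
        _ ≤ 1 := by
            rw [div_le_one (by positivity)]; linarith
    have hmem := hpconv m (fun i => t i / κ) a haA hsum
    have heq : (∑ i, (t i / κ) • a i) = κ⁻¹ • z := by
      rw [hzeq, Finset.smul_sum]
      refine Finset.sum_congr rfl fun i _ => ?_
      rw [smul_smul, div_eq_inv_mul]
    rw [heq] at hmem
    exact ⟨κ⁻¹ • z, hmem, by simpa using smul_inv_smul₀ hκpos.ne' z⟩
  -- x - z ∈ (1/2) • B
  have hw' : ‖w‖ ≤ 1/4 := by
    obtain ⟨v, hv, rfl⟩ := hw
    rw [norm_smul]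
    have : ‖v‖ ≤ 1 := by simpa [Metric.mem_closedBall, dist_zero_right] using hv
    calc ‖(1/4 : ℝ)‖ * ‖v‖ ≤ ‖(1/4 : ℝ)‖ * 1 :=
          mul_le_mul_of_nonneg_left this (norm_nonneg _)
      _ = 1/4 := by norm_num
  have hxz : ‖x - z‖ ≤ 1/2 := by
    have : x - z = (x - y) + w := by rw [← hzw]; beta_reduce; abel
    rw [this]
    have hxy' : ‖x - y‖ ≤ 1/4 := by
      rw [← dist_eq_norm]; linarith
    calc ‖(x - y) + w‖ ≤ ‖x - y‖ + ‖w‖ := norm_add_le _ _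
      _ ≤ 1/2 := by linarith
  refine ⟨x - z, ?_, z, hzA, by show x - z + z = x; rw [sub_add_cancel]⟩
  refine ⟨(2 : ℝ) • (x - z), ?_, ?_⟩
  · simp only [Metric.mem_closedBall, dist_zero_right, norm_smul]
    calc ‖(2 : ℝ)‖ * ‖x - z‖ ≤ 2 * (1/2) := by
          rw [Real.norm_ofNat]
          exact mul_le_mul_of_nonneg_left hxz (by norm_num)
      _ = 1 := by norm_num
  · show (1/2 : ℝ) • ((2:ℝ) • (x - z)) = x - z
    rw [smul_smul]; norm_num
end
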